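/- arXiv:1508.01688 — 8 statements merged into one kernel-verified Lean document; each statement's English description precedes it below -/
import Mathlib

section
/- For n ≥ 1, the number of sequences (d_0,...,d_n) of nonnegative integers satisfying d_0+⋯+d_n = n, d_0+⋯+d_{i-1} ≥ i for all i in {1,...,n}, and d_i ≤ 1 for all i in {1,...,n}, equals 2^{n-1}. -/
/-- `d` is the multi-degree sequence of a plane tree with `n+1` nodes:
`d_0 + ⋯ + d_n = n` and `d_0 + ⋯ + d_{i-1} ≥ i` for all `i ∈ {1,…,n}`
(entries beyond index `n` vanish). -/
def IsTreeDeg (n : ℕ) (d : ℕ → ℕ) : Prop :=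
  (∀ i, n < i → d i = 0) ∧ (∑ i ∈ Finset.range (n + 1), d i = n) ∧
    (∀ i, 1 ≤ i → i ≤ n → i ≤ ∑ j ∈ Finset.range i, d j)

/-!
Such a sequence is determined by the set `S = {i ≥ 1 | d_i = 1}`, since the total forces
`d_0 = n - |S|`. The prefix condition at `i = n` forces `d_n = 0`, so `S ⊆ {1, …, n-1}`.
Conversely every such `S` gives a valid sequence: the prefix sum up to `i` misses only the
elements of `S` in `[i, n)`, of which there are at most `n - i`. Hence the sequences
correspond to the `2^(n-1)` subsets of `{1, …, n-1}`.
-/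

open Finset

namespace TreeDeg

def ofFinset (n : ℕ) (S : Finset ℕ) (i : ℕ) : ℕ :=
  (if i = 0 then n - #S else 0) + (if i ∈ S then 1 else 0)

variable {n : ℕ} {S : Finset ℕ}

lemma ofFinset_of_ne_zero {i : ℕ} (hi : i ≠ 0) :
    ofFinset n S i = if i ∈ S then 1 else 0 := by
  simp [ofFinset, hi]

lemma sum_range_ofFinset {m : ℕ} (hm : 1 ≤ m) :
    ∑ i ∈ range m, ofFinset n S i = n - #S + #(range m ∩ S) := by
  simp only [ofFinset, sum_add_distrib, sum_ite_eq', sum_ite_mem, sum_const, smul_eq_mul,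
    mul_one, mem_range]
  simp [show 0 < m by omega]

lemma isTreeDeg_ofFinset (hS : S ⊆ Ioo 0 n) : IsTreeDeg n (ofFinset n S) := by
  have hmem : ∀ {i}, i ∈ S → 0 < i ∧ i < n := fun hi => mem_Ioo.mp (hS hi)
  have hcard : #S ≤ n - 1 := by simpa using card_le_card hS
  refine ⟨fun i hi => ?_, ?_, fun i hi hin => ?_⟩
  · rw [ofFinset_of_ne_zero (by omega), if_neg fun h => by have := hmem h; omega]
  · have hS_range : range (n + 1) ∩ S = S :=
      inter_eq_right.mpr fun i hi => mem_range.mpr (by have := hmem hi; omega)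
    rw [sum_range_ofFinset (by omega), hS_range]
    omega
  · have hsplit : S ⊆ (range i ∩ S) ∪ Ico i n := fun j hj => by
      have := hmem hj
      by_cases hji : j < i <;> simp_all
    have := (card_le_card hsplit).trans (card_union_le _ _)
    rw [sum_range_ofFinset hi]
    simp only [Nat.card_Ico] at this
    omega

lemma ofFinset_le_one {i : ℕ} (hi : 1 ≤ i) : ofFinset n S i ≤ 1 := by
  rw [ofFinset_of_ne_zero (by omega)]
  split <;> omega

lemma ofFinset_injOn : Set.InjOn (ofFinset n) {S | 0 ∉ S} := by
  intro S hS T hT h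
  ext i
  rcases eq_or_ne i 0 with rfl | hi
  · exact iff_of_false hS hT
  · have := congrFun h i
    rw [ofFinset_of_ne_zero hi, ofFinset_of_ne_zero hi] at this
    split_ifs at this <;> simp_all

lemma _root_.IsTreeDeg.apply_self {d : ℕ → ℕ} (hd : IsTreeDeg n d) (hn : 1 ≤ n) : d n = 0 := by
  have hpre := hd.2.2 n hn le_rfl
  have htotal := hd.2.1
  rw [sum_range_succ] at htotal
  omega

lemma _root_.IsTreeDeg.eq_ofFinset {d : ℕ → ℕ} (hd : IsTreeDeg n d)
    (hle : ∀ i, 1 ≤ i → i ≤ n → d i ≤ 1) :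
    d = ofFinset n ((Ioo 0 n).filter (d · = 1)) := by
  set S := (Ioo 0 n).filter (d · = 1)
  have hsucc : ∀ i, d (i + 1) = ofFinset n S (i + 1) := fun i => by
    have hmem : i + 1 ∈ S ↔ i + 1 < n ∧ d (i + 1) = 1 := by simp [S]
    rw [ofFinset_of_ne_zero i.succ_ne_zero]
    rcases lt_trichotomy (i + 1) n with hlt | rfl | hgt
    · have := hle (i + 1) (by omega) hlt.le
      rw [if_congr hmem rfl rfl]
      split_ifs <;> omega
    · simp [hmem, hd.apply_self (by omega)]
    · simp [hmem, hd.1 _ hgt]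
  -- both sequences have total `n` and agree away from the root, hence also at the root
  have hroot : d 0 = ofFinset n S 0 := by
    have h1 := hd.2.1
    have h2 := (isTreeDeg_ofFinset (S := S) (filter_subset _ _)).2.1
    rw [sum_range_succ'] at h1 h2
    simp only [hsucc] at h1
    omega
  funext i
  cases i with
  | zero => exact hroot
  | succ i => exact hsucc i

end TreeDeg

open TreeDeg in
theorem card_treeDeg_le_one_general (n : ℕ) :
    Nat.card {d : ℕ → ℕ // IsTreeDeg n d ∧ ∀ i, 1 ≤ i → i ≤ n → d i ≤ 1} = 2 ^ (n - 1) := by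
  have h0 : ∀ S ∈ (Ioo 0 n).powerset, 0 ∉ S := fun S hS h => by
    simpa using mem_powerset.mp hS h
  let φ : (Ioo 0 n).powerset → {d : ℕ → ℕ // IsTreeDeg n d ∧ ∀ i, 1 ≤ i → i ≤ n → d i ≤ 1} :=
    fun S => ⟨ofFinset n S, isTreeDeg_ofFinset (mem_powerset.mp S.2),
      fun i hi _ => ofFinset_le_one hi⟩
  have hφ : Function.Bijective φ := by
    refine ⟨fun S T h => Subtype.ext (ofFinset_injOn (h0 S S.2) (h0 T T.2) congr($h.1)), ?_⟩
    rintro ⟨d, hd, hle⟩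
    exact ⟨⟨_, mem_powerset.mpr (filter_subset _ _)⟩, Subtype.ext (hd.eq_ofFinset hle).symm⟩
  rw [← Nat.card_eq_of_bijective φ hφ, Nat.card_eq_fintype_card, Fintype.card_coe,
    card_powerset, Nat.card_Ioo, Nat.sub_zero]

/-- The modular Catalan number `C_{2,n}` equals `2^{n-1}`: the number of plane trees
with `n+1` nodes whose non-root nodes have degree less than `2`. -/
theorem card_treeDeg_le_one (n : ℕ) (hn : 1 ≤ n) :
    Nat.card {d : ℕ → ℕ // IsTreeDeg n d ∧ ∀ i, 1 ≤ i → i ≤ n → d i ≤ 1} = 2 ^ (n - 1) :=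
  card_treeDeg_le_one_general n
end

section
/- For n ≥ 0 and k ≥ 1, the number of sequences (d_0,...,d_n) of nonnegative integers with d_0+⋯+d_n = n, all partial sums d_0+⋯+d_{i-1} ≥ i for i in {1,...,n}, and d_i ≤ k for all i in {0,...,n}, equals (1/(n+1))·Σ_{0 ≤ j ≤ n/(k+1)} (-1)^j·C(n+1,j)·C(2n-j(k+1), n). -/
/-! Among the `n + 1` cyclic rotations of a sequence of `n + 1` natural numbers with sum `n`,
exactly one satisfies the prefix-sum condition: the one starting at the first minimum of
`t ↦ d_0 + ⋯ + d_{t-1} - t`, which drops by `1` per period (cycle lemma). Hence `n + 1` times the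
count is the number of compositions of `n` into `n + 1` parts, all at most `k`; inclusion–exclusion
over the set of parts exceeding `k`, followed by stars and bars, gives the alternating sum. -/

open Finset Fin.NatCast

section Compositions

variable {ι : Type*} [Fintype ι]

theorem card_sum_eq_choose (s : ℕ) :
    Nat.card {f : ι → ℕ // ∑ i, f i = s} = (Fintype.card ι + s - 1).choose s := by
  classical
  rw [← Nat.card_congr (Sym.equivNatSumOfFintype ι s), Nat.card_eq_fintype_card,
    Sym.card_sym_eq_choose]

def sumEqAddEquiv (s : ℕ) (c : ι → ℕ) :
    {g : ι → ℕ // ∑ i, g i = s} ≃ {f : ι → ℕ // ∑ i, f i = s + ∑ i, c i ∧ c ≤ f} where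
  toFun g := ⟨g + c, by simp [sum_add_distrib, g.2], le_add_self⟩
  invFun f := ⟨f - c, by
    simp only [Pi.sub_apply]
    rw [sum_tsub_distrib _ fun i _ => f.2.2 i, f.2.1, Nat.add_sub_cancel]⟩
  left_inv g := by ext; simp
  right_inv f := by ext i; simp [tsub_add_cancel_of_le (f.2.2 i)]

theorem card_sum_eq_and_le (s : ℕ) (c : ι → ℕ) :
    Nat.card {f : ι → ℕ // ∑ i, f i = s ∧ c ≤ f} =
      if ∑ i, c i ≤ s then (Fintype.card ι + (s - ∑ i, c i) - 1).choose (s - ∑ i, c i)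
      else 0 := by
  split_ifs with hc
  · obtain ⟨s, rfl⟩ := Nat.exists_eq_add_of_le' hc
    rw [← Nat.card_congr (sumEqAddEquiv s c), Nat.add_sub_cancel, card_sum_eq_choose]
  · have : IsEmpty {f : ι → ℕ // ∑ i, f i = s ∧ c ≤ f} :=
      ⟨fun f => hc (f.2.1 ▸ sum_le_sum fun i _ => f.2.2 i)⟩
    exact Nat.card_of_isEmpty

theorem card_sum_eq_and_eq_card_filter_piAntidiag [DecidableEq ι] (s : ℕ) (P : (ι → ℕ) → Prop)
    [DecidablePred P] :
    Nat.card {f : ι → ℕ // ∑ i, f i = s ∧ P f} =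
      #(univ.filter fun f : piAntidiag (univ : Finset ι) s => P f) := by
  rw [← Fintype.card_subtype, ← Nat.card_eq_fintype_card]
  refine Nat.card_congr ((Equiv.subtypeSubtypeEquivSubtypeInter _ P).trans ?_).symm
  exact Equiv.subtypeEquivRight fun f => by simp

theorem card_sum_eq_and_forall_le_eq_sum_powerset (s k : ℕ) :
    (Nat.card {f : ι → ℕ // ∑ i, f i = s ∧ ∀ i, f i ≤ k} : ℤ) =
      ∑ t ∈ (univ : Finset ι).powerset,
        (-1) ^ #t * (Nat.card {f : ι → ℕ // ∑ i, f i = s ∧ ∀ i ∈ t, k < f i} : ℤ) := by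
  classical
  have := inclusion_exclusion_card_inf_compl univ
    fun i => univ.filter fun f : piAntidiag (univ : Finset ι) s => k < f.1 i
  simp only [card_sum_eq_and_eq_card_filter_piAntidiag]
  convert this using 4 with t
  · ext f; simp [mem_inf]
  · congr 1; ext f; simp [mem_inf]

theorem card_sum_eq_and_forall_lt (s k : ℕ) (t : Finset ι) :
    Nat.card {f : ι → ℕ // ∑ i, f i = s ∧ ∀ i ∈ t, k < f i} =
      if #t * (k + 1) ≤ s then
        (Fintype.card ι + (s - #t * (k + 1)) - 1).choose (s - #t * (k + 1))
      else 0 := by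
  classical
  let c : ι → ℕ := fun i => if i ∈ t then k + 1 else 0
  have hc : ∑ i, c i = #t * (k + 1) := by simp [c, sum_ite_mem]
  have hle (f : ι → ℕ) : (∀ i ∈ t, k < f i) ↔ c ≤ f :=
    ⟨fun h i => by by_cases hi : i ∈ t <;> simp [c, hi, h i],
      fun h i hi => by simpa [c, hi] using h i⟩
  rw [← hc, ← card_sum_eq_and_le]
  exact Nat.card_congr (Equiv.subtypeEquivRight fun f => and_congr_right' (hle f))

theorem card_sum_eq_and_forall_le (s k : ℕ) :
    (Nat.card {f : ι → ℕ // ∑ i, f i = s ∧ ∀ i, f i ≤ k} : ℤ) =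
      ∑ j ∈ range (s / (k + 1) + 1), (-1) ^ j * ((Fintype.card ι).choose j : ℤ) *
        ((Fintype.card ι + (s - j * (k + 1)) - 1).choose (s - j * (k + 1)) : ℤ) := by
  set m := Fintype.card ι
  have hle_div (j : ℕ) : j * (k + 1) ≤ s ↔ j < s / (k + 1) + 1 := by
    rw [Nat.lt_succ_iff, Nat.le_div_iff_mul_le k.succ_pos]
  let g : ℕ → ℤ := fun j => (-1) ^ j *
    ((if j * (k + 1) ≤ s then (m + (s - j * (k + 1)) - 1).choose (s - j * (k + 1)) else 0 : ℕ) : ℤ)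
  rw [card_sum_eq_and_forall_le_eq_sum_powerset,
    sum_congr rfl fun t _ => by rw [card_sum_eq_and_forall_lt],
    sum_powerset_apply_card g, card_univ]
  have hbig : ∑ j ∈ range (m + 1), m.choose j • g j =
      ∑ j ∈ range (m + s / (k + 1) + 1), m.choose j • g j := by
    refine sum_subset (range_subset_range.2 (by simp)) fun j _ hj => ?_
    rw [Nat.choose_eq_zero_of_lt (by simpa using hj), zero_smul]
  have hcut : ∑ j ∈ range (s / (k + 1) + 1), m.choose j • g j =
      ∑ j ∈ range (m + s / (k + 1) + 1), m.choose j • g j := by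
    refine sum_subset (range_subset_range.2 (by simp)) fun j _ hj => ?_
    simp [g, if_neg (mt (hle_div j).1 (by simpa using hj))]
  rw [hbig, ← hcut]
  refine sum_congr rfl fun j hj => ?_
  simp only [g, if_pos ((hle_div j).2 (mem_range.1 hj)), nsmul_eq_mul]
  ring

end Compositions

theorem existsUnique_forall_le_add_of_add_period {p : ℕ} [NeZero p] (h : ℕ → ℤ)
    (hper : ∀ t, h (t + p) = h t - 1) : ∃! r : Fin p, ∀ i < p, h r ≤ h (r + i) := by
  have hmin : ∃ r, r < p ∧ ∀ t < p, h r ≤ h t := by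
    obtain ⟨r, hr, hr_min⟩ := exists_min_image (range p) h ⟨0, by simp [Nat.pos_of_neZero]⟩
    exact ⟨r, mem_range.1 hr, fun t ht => hr_min t (mem_range.2 ht)⟩
  set r := Nat.find hmin
  obtain ⟨hr, hr_min⟩ : r < p ∧ ∀ t < p, h r ≤ h t := Nat.find_spec hmin
  have hfirst : ∀ t < r, h r < h t := fun t ht =>
    (hr_min t (ht.trans hr)).lt_of_ne fun heq =>
      Nat.find_min hmin ht ⟨ht.trans hr, fun u hu => heq ▸ hr_min u hu⟩
  have hgood : ∀ i < p, h r ≤ h (r + i) := by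
    intro i hi
    by_cases hwrap : r + i < p
    · exact hr_min _ hwrap
    · have hshift := hper (r + i - p)
      rw [Nat.sub_add_cancel (by omega)] at hshift
      have := hfirst (r + i - p) (by omega)
      omega
  have hnot_lt (a b : Fin p) (ha : ∀ i < p, h a ≤ h (a + i)) (hb : ∀ i < p, h b ≤ h (b + i)) :
      ¬ a < b := by
    intro hab
    have h1 := ha (b - a) (by omega)
    have h2 := hb (a + p - b) (by omega)
    rw [Nat.add_sub_cancel' hab.le] at h1
    rw [Nat.add_sub_cancel' (by omega), hper] at h2
    omega
  exact ⟨⟨r, hr⟩, hgood, fun r' hr' =>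
    le_antisymm (not_lt.1 (hnot_lt _ _ hgood hr')) (not_lt.1 (hnot_lt _ _ hr' hgood))⟩

section CycleLemma

variable {n : ℕ}

def IsDominated (w : Fin (n + 1) → ℕ) : Prop :=
  ∀ i ≤ n, i ≤ ∑ j ∈ range i, w j

theorem sum_range_val_add (v : Fin (n + 1) → ℕ) (r : Fin (n + 1)) (i : ℕ) :
    ∑ j ∈ range (r + i), v j = ∑ j ∈ range r, v j + ∑ j ∈ range i, v (j + r) := by
  rw [sum_range_add]
  congr! 3 with j
  simp only [Nat.cast_add, Fin.cast_val_eq_self]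
  exact add_comm _ _

theorem sum_range_add_period (v : Fin (n + 1) → ℕ) (t : ℕ) :
    ∑ j ∈ range (t + (n + 1)), v j = ∑ j ∈ range t, v j + ∑ i, v i := by
  rw [sum_range_add, ← Fin.sum_univ_eq_sum_range (fun j => v ↑(t + j))]
  simp only [Nat.cast_add, Fin.cast_val_eq_self]
  exact congrArg _ (Fintype.sum_equiv (Equiv.addLeft (t : Fin (n + 1))) _ _ fun _ => rfl)

theorem existsUnique_isDominated_rotate (v : Fin (n + 1) → ℕ) (hv : ∑ i, v i = n) :
    ∃! r : Fin (n + 1), IsDominated fun i => v (i + r) := by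
  -- the rotation by `r` is dominated iff `r` minimises `t ↦ ∑_{j<t} v j - t` on `[r, r + n]`
  let h : ℕ → ℤ := fun t => ∑ j ∈ range t, (v j : ℤ) - t
  have hper : ∀ t, h (t + (n + 1)) = h t - 1 := fun t => by
    simp only [h, ← Nat.cast_sum, sum_range_add_period, hv]
    push_cast
    ring
  have hiff (r : Fin (n + 1)) :
      (IsDominated fun i => v (i + r)) ↔ ∀ i < n + 1, h r ≤ h (r + i) := by
    refine forall_congr' fun i => ?_
    simp only [h, ← Nat.cast_sum, sum_range_val_add, Nat.lt_succ_iff, Nat.cast_add]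
    exact imp_congr_right fun _ => by omega
  simpa only [hiff] using existsUnique_forall_le_add_of_add_period h hper

theorem sum_rotate (v : Fin (n + 1) → ℕ) (r : Fin (n + 1)) : ∑ i, v (i + r) = ∑ i, v i :=
  Fintype.sum_equiv (Equiv.addRight r) _ _ fun _ => rfl

noncomputable def rotateEquiv (Q : (Fin (n + 1) → ℕ) → Prop)
    (hQ : ∀ v r, Q (fun i => v (i + r)) ↔ Q v) :
    Fin (n + 1) × {w : Fin (n + 1) → ℕ // (∑ i, w i = n ∧ Q w) ∧ IsDominated w} ≃
      {v : Fin (n + 1) → ℕ // ∑ i, v i = n ∧ Q v} where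
  toFun p := ⟨fun i => p.2.1 (i - p.1), by
    simp only [sub_eq_add_neg, sum_rotate, hQ, p.2.2.1, and_self]⟩
  invFun v := ⟨(existsUnique_isDominated_rotate v.1 v.2.1).choose,
    fun i => v.1 (i + (existsUnique_isDominated_rotate v.1 v.2.1).choose),
    by simp only [sum_rotate, hQ, v.2, and_self],
    (existsUnique_isDominated_rotate v.1 v.2.1).choose_spec.1⟩
  left_inv := by
    rintro ⟨r, w, hw⟩
    have hsum : ∑ i, w (i - r) = n := by simpa only [sub_eq_add_neg, sum_rotate] using hw.1.1
    have hr : (existsUnique_isDominated_rotate _ hsum).choose = r :=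
      (existsUnique_isDominated_rotate _ hsum).unique
        (existsUnique_isDominated_rotate _ hsum).choose_spec.1
        (by simpa only [add_sub_cancel_right] using hw.2)
    ext i
    · exact congrArg Fin.val hr
    · simp [hr]
  right_inv v := by ext i; simp

theorem card_eq_mul_card_isDominated (Q : (Fin (n + 1) → ℕ) → Prop)
    (hQ : ∀ v r, Q (fun i => v (i + r)) ↔ Q v) :
    Nat.card {v : Fin (n + 1) → ℕ // ∑ i, v i = n ∧ Q v} =
      (n + 1) * Nat.card {w : Fin (n + 1) → ℕ // (∑ i, w i = n ∧ Q w) ∧ IsDominated w} := by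
  rw [← Nat.card_congr (rotateEquiv Q hQ), Nat.card_prod, Nat.card_eq_fintype_card,
    Fintype.card_fin]

end CycleLemma

def extendByZeroEquiv (M : Type*) [Zero M] (n : ℕ) :
    {d : ℕ → M // ∀ i, n < i → d i = 0} ≃ (Fin (n + 1) → M) where
  toFun d i := d.1 i
  invFun w := ⟨fun i => if h : i < n + 1 then w ⟨i, h⟩ else 0, fun i hi => dif_neg (by omega)⟩
  left_inv d := by
    ext i
    by_cases hi : i < n + 1
    · simp [hi]
    · simp [hi, d.2 i (by omega)]
  right_inv w := funext fun i => dif_pos i.isLt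

theorem sum_range_comp_val_natCast {M : Type*} [AddCommMonoid M] (d : ℕ → M) {n i : ℕ}
    (hi : i ≤ n + 1) : ∑ j ∈ range i, d ((j : Fin (n + 1)) : ℕ) = ∑ j ∈ range i, d j :=
  sum_congr rfl fun j hj => by rw [Fin.val_natCast, Nat.mod_eq_of_lt (by simp at hj; omega)]

theorem card_isTreeDeg_eq_card_isDominated (n k : ℕ) :
    Nat.card {d : ℕ → ℕ // IsTreeDeg n d ∧ ∀ i, i ≤ n → d i ≤ k} =
      Nat.card {w : Fin (n + 1) → ℕ // (∑ i, w i = n ∧ ∀ i, w i ≤ k) ∧ IsDominated w} := by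
  let R (d : ℕ → ℕ) : Prop := (∑ i ∈ range (n + 1), d i = n ∧ ∀ i ≤ n, d i ≤ k) ∧
    ∀ i, 1 ≤ i → i ≤ n → i ≤ ∑ j ∈ range i, d j
  have hR (d : ℕ → ℕ) : (IsTreeDeg n d ∧ ∀ i, i ≤ n → d i ≤ k) ↔
      (∀ i, n < i → d i = 0) ∧ R d := by
    simp only [IsTreeDeg, R]; tauto
  refine Nat.card_congr <| (Equiv.subtypeEquivRight hR).trans <|
    (Equiv.subtypeSubtypeEquivSubtypeInter _ R).symm.trans <|
    Equiv.subtypeEquiv (extendByZeroEquiv ℕ n) fun d => ?_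
  have hsum : ∑ i, extendByZeroEquiv ℕ n d i = ∑ i ∈ range (n + 1), d.1 i :=
    Fin.sum_univ_eq_sum_range d.1 (n + 1)
  have hbound : (∀ i, extendByZeroEquiv ℕ n d i ≤ k) ↔ ∀ i ≤ n, d.1 i ≤ k :=
    Fin.forall_iff.trans <| forall_congr' fun _ =>
      ⟨fun h hi => h (Nat.lt_succ_of_le hi), fun h hi => h (Nat.le_of_lt_succ hi)⟩
  have hdom : IsDominated (extendByZeroEquiv ℕ n d) ↔
      ∀ i, 1 ≤ i → i ≤ n → i ≤ ∑ j ∈ range i, d.1 j := by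
    refine forall_congr' fun i => ⟨fun h _ hi => ?_, fun h hi => ?_⟩
    · exact sum_range_comp_val_natCast (n := n) d.1 (Nat.le_succ_of_le hi) ▸ h hi
    · rcases i.eq_zero_or_pos with rfl | hpos
      · exact Nat.zero_le _
      · exact (sum_range_comp_val_natCast (n := n) d.1 (Nat.le_succ_of_le hi)).symm ▸ h hpos hi
  rw [hsum, hbound, hdom]

theorem generalized_motzkin_formula_general (n k : ℕ) :
    ((n : ℤ) + 1) * Nat.card {d : ℕ → ℕ // IsTreeDeg n d ∧ ∀ i, i ≤ n → d i ≤ k} =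
      ∑ j ∈ Finset.range (n / (k + 1) + 1),
        (-1) ^ j * ((n + 1).choose j : ℤ) * ((2 * n - j * (k + 1)).choose n : ℤ) := by
  have hrotate (v : Fin (n + 1) → ℕ) (r : Fin (n + 1)) : (∀ i, v (i + r) ≤ k) ↔ ∀ i, v i ≤ k :=
    ⟨fun h i => by simpa using h (i - r), fun h i => h _⟩
  rw [card_isTreeDeg_eq_card_isDominated, ← Nat.cast_succ, ← Nat.cast_mul,
    ← card_eq_mul_card_isDominated _ hrotate, card_sum_eq_and_forall_le, Fintype.card_fin]
  refine sum_congr rfl fun j hj => ?_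
  have hjk : j * (k + 1) ≤ n :=
    (Nat.le_div_iff_mul_le k.succ_pos).1 (Nat.lt_succ_iff.1 (mem_range.1 hj))
  rw [show n + 1 + (n - j * (k + 1)) - 1 = n + (n - j * (k + 1)) by omega, ← Nat.choose_symm_add,
    show 2 * n - j * (k + 1) = n + (n - j * (k + 1)) by omega]

/-- Closed formula for the generalized Motzkin number `M_{k,n}` (times `n+1`):
the number of plane trees with `n+1` nodes all of whose nodes have degree `≤ k`. -/
theorem generalized_motzkin_formula (n k : ℕ) (hk : 1 ≤ k) :
    ((n : ℤ) + 1) * Nat.card {d : ℕ → ℕ // IsTreeDeg n d ∧ ∀ i, i ≤ n → d i ≤ k} =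
      ∑ j ∈ Finset.range (n / (k + 1) + 1),
        (-1) ^ j * ((n + 1).choose j : ℤ) * ((2 * n - j * (k + 1)).choose n : ℤ) :=
  generalized_motzkin_formula_general n k
end

section
/- For n ≥ 1, given nonnegative integers ℓ, m_0, m_1, m_2, ... with m_0 + m_1 + m_2 + ⋯ = n, the number of plane trees with a root of degree ℓ and exactly m_i non-root nodes of degree i for each i ≥ 0 equals (ℓ/n)·n!/(m_0!·m_1!·m_2!⋯) if m_1 + 2m_2 + 3m_3 + ⋯ = n - ℓ, and equals 0 otherwise. -/
open Finset
open scoped Nat Fin.NatCast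

def IsStrictPrefixMin (S : ℕ → ℤ) (s : ℕ) : Prop := ∀ t < s, S s < S t

instance (S : ℕ → ℤ) : DecidablePred (IsStrictPrefixMin S) :=
  fun s => inferInstanceAs (Decidable (∀ t < s, S s < S t))

section StrictPrefixMin

variable {S : ℕ → ℤ}

-- A walk with steps `≥ -1` reaches each level between its minimum and `S 0` for the first time
-- exactly once.
theorem card_filter_isStrictPrefixMin_range (hS : ∀ t, S t - 1 ≤ S (t + 1)) {N : ℕ} (hN : 0 < N) :
    (#{s ∈ range N | IsStrictPrefixMin S s} : ℤ) =
      S 0 + 1 - (range N).inf' (nonempty_range_iff.2 hN.ne') S := by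
  induction N, hN using Nat.le_induction with
  | base => simp [IsStrictPrefixMin, filter_singleton]
  | succ N hN ih =>
    have hne : (range N).Nonempty := nonempty_range_iff.2 (by omega)
    simp only [range_add_one, filter_insert, inf'_insert hne]
    by_cases hrec : IsStrictPrefixMin S N
    · have hlt : S N < (range N).inf' hne S :=
        (lt_inf'_iff hne).2 fun t ht => hrec t (mem_range.1 ht)
      have hge : (range N).inf' hne S - 1 ≤ S N := by
        have := inf'_le S (mem_range.2 (show N - 1 < N by omega))
        have := hS (N - 1)
        rw [Nat.sub_add_cancel hN] at this
        linarith
      rw [if_pos hrec, card_insert_of_notMem (by simp), min_eq_left hlt.le]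
      push_cast
      linarith
    · obtain ⟨t, ht, hle⟩ : ∃ t < N, S t ≤ S N := by simpa [IsStrictPrefixMin] using hrec
      rw [if_neg hrec, min_eq_right ((inf'_le S (mem_range.2 ht)).trans hle)]
      exact ih

-- Cycle lemma: the strict prefix minima in `[n, 2n)` sit at the `ℓ` levels between the minimum
-- over `[0, 2n)` and the minimum over `[0, n)`.
theorem card_filter_isStrictPrefixMin_add (hS : ∀ t, S t - 1 ≤ S (t + 1)) {n ℓ : ℕ} (hn : 0 < n)
    (hdrift : ∀ t, S (n + t) = S t - ℓ) :
    #{r ∈ range n | IsStrictPrefixMin S (n + r)} = ℓ := by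
  have hn' : (range n).Nonempty := nonempty_range_iff.2 hn.ne'
  have hsplit : #{s ∈ range (n + n) | IsStrictPrefixMin S s} =
      #{s ∈ range n | IsStrictPrefixMin S s} + #{r ∈ range n | IsStrictPrefixMin S (n + r)} := by
    simp only [card_filter, sum_range_add]
  have hmin : (range (n + n)).inf' (nonempty_range_iff.2 (by omega)) S =
      (range n).inf' hn' S - ℓ := by
    obtain ⟨t₀, ht₀, hmin⟩ := exists_mem_eq_inf' hn' S
    refine le_antisymm ?_ (le_inf' _ _ fun t ht => ?_)
    · rw [hmin, ← hdrift]
      exact inf'_le S (mem_range.2 (by simp at ht₀; omega))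
    · rcases lt_or_ge t n with htn | htn
      · linarith [inf'_le S (mem_range.2 htn), (Nat.cast_nonneg ℓ : (0 : ℤ) ≤ ℓ)]
      · obtain ⟨u, rfl⟩ := Nat.exists_eq_add_of_le htn
        rw [hdrift]
        linarith [inf'_le S (mem_range.2 (show u < n by simp at ht; omega))]
  have h₁ := card_filter_isStrictPrefixMin_range hS hn
  have h₂ := card_filter_isStrictPrefixMin_range hS (show 0 < n + n by omega)
  rw [hsplit, hmin] at h₂
  push_cast at h₂
  omega

theorem isStrictPrefixMin_shift_iff {n ℓ r : ℕ} (hdrift : ∀ t, S (n + t) = S t - ℓ) (hr : r ≤ n)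
    (a : ℤ) : IsStrictPrefixMin (fun t => S (r + t) - a) n ↔ IsStrictPrefixMin S (n + r) := by
  simp only [IsStrictPrefixMin, sub_lt_sub_iff_right]
  constructor
  · intro h t ht
    rcases lt_or_ge t r with htr | htr
    · have := h (n + t - r) (by omega)
      rw [show r + (n + t - r) = n + t by omega, hdrift, add_comm r n] at this
      linarith
    · have := h (t - r) (by omega)
      rwa [show r + (t - r) = t by omega, add_comm r n] at this
  · intro h t ht
    rw [add_comm r n]
    exact h (r + t) (by omega)

end StrictPrefixMin

def walk (c : ℕ → ℕ) (t : ℕ) : ℤ := ∑ j ∈ range t, ((c j : ℤ) - 1)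

section Walk

variable (c : ℕ → ℕ)

theorem walk_eq (t : ℕ) : walk c t = ∑ j ∈ range t, (c j : ℤ) - t := by
  simp [walk, sum_sub_distrib]

theorem walk_sub_one_le (t : ℕ) : walk c t - 1 ≤ walk c (t + 1) := by
  simp only [walk, sum_range_succ]
  linarith [(c t).cast_nonneg (α := ℤ)]

theorem walk_add (r t : ℕ) : walk c (r + t) = walk c r + walk (fun j => c (r + j)) t :=
  sum_range_add _ r t

end Walk

section FiberCard

variable {α ι : Type*} [Fintype α] [DecidableEq ι]

theorem card_filter_comp_perm (f : α → ι) (σ : Equiv.Perm α) (i : ι) :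
    #{a | f (σ a) = i} = #{a | f a = i} := by
  simp only [← Fintype.card_subtype]
  exact Fintype.card_congr (σ.subtypeEquiv fun _ => Iff.rfl)

theorem exists_perm_comp_eq_iff {f g : α → ι} :
    (∃ σ : Equiv.Perm α, f ∘ σ = g) ↔ ∀ i, #{a | f a = i} = #{a | g a = i} := by
  constructor
  · rintro ⟨σ, rfl⟩ i
    exact (card_filter_comp_perm f σ i).symm
  · intro h
    simp only [← Fintype.card_subtype] at h
    let σ : Equiv.Perm α := Equiv.ofFiberEquiv fun i => (Fintype.equivOfCardEq (h i)).symm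
    exact ⟨σ, funext fun a => Equiv.ofFiberEquiv_map _ a⟩

variable [Fintype ι] [DecidableEq α]

omit [DecidableEq α] in
theorem exists_fiber_card_eq (m : ι → ℕ) (hm : ∑ i, m i = Fintype.card α) :
    ∃ f : α → ι, ∀ i, #{a | f a = i} = m i := by
  let e : α ≃ Σ i, Fin (m i) := Fintype.equivOfCardEq (by simp [hm])
  refine ⟨fun a => (e a).1, fun i => ?_⟩
  rw [← Fintype.card_subtype]
  change Fintype.card {a // (e a).1 = i} = m i
  rw [Fintype.card_congr (e.subtypeEquiv (q := fun x => x.1 = i) fun _ => Iff.rfl),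
    Fintype.card_congr (Equiv.sigmaSubtype i), Fintype.card_fin]

theorem card_filter_fiber_card_eq_mul_prod_factorial (m : ι → ℕ) (hm : ∑ i, m i = Fintype.card α) :
    #{f : α → ι | ∀ i, #{a | f a = i} = m i} * ∏ i, (m i)! = (Fintype.card α)! := by
  obtain ⟨f₀, hf₀⟩ := exists_fiber_card_eq m hm
  -- Orbit–stabilizer for `Perm α` acting by precomposition: the orbit of `f₀` consists of the
  -- functions with the same fiber sizes, and the stabilizer is `∏ i, Perm (f₀ ⁻¹' {i})`.
  have horbit : MulAction.orbit (Equiv.Perm α)ᵈᵐᵃ f₀ =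
      ↑({f : α → ι | ∀ i, #{a | f a = i} = m i} : Finset _) := by
    ext f
    simp only [MulAction.mem_orbit_iff, coe_filter, mem_univ, true_and, Set.mem_ofPred_eq,
      DomMulAct.mk.symm.exists_congr_left]
    change (∃ σ : Equiv.Perm α, f₀ ∘ σ = f) ↔ _
    rw [exists_perm_comp_eq_iff]
    simp only [hf₀]
    exact forall_congr' fun _ => eq_comm
  have hstab : Nat.card (MulAction.stabilizer (Equiv.Perm α)ᵈᵐᵃ f₀) = ∏ i, (m i)! := by
    rw [Nat.card_congr (Equiv.subtypeEquiv (q := fun g : Equiv.Perm α => f₀ ∘ g = f₀)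
      DomMulAct.mk.symm fun _ => DomMulAct.mem_stabilizer_iff),
      Nat.card_eq_fintype_card, DomMulAct.stabilizer_card]
    simp only [Fintype.card_subtype, hf₀]
  calc _ = Nat.card (MulAction.orbit (Equiv.Perm α)ᵈᵐᵃ f₀) *
        Nat.card (MulAction.stabilizer (Equiv.Perm α)ᵈᵐᵃ f₀) := by
        rw [hstab, horbit, Nat.card_coe_set_eq, Set.ncard_coe_finset]
    _ = Nat.card (Equiv.Perm α)ᵈᵐᵃ := by
        rw [← Nat.card_prod, Nat.card_congr (MulAction.orbitProdStabilizerEquivGroup _ f₀)]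
    _ = (Fintype.card α)! := by
        rw [Nat.card_congr DomMulAct.mk.symm, Nat.card_perm, Nat.card_eq_fintype_card]

theorem card_filter_fiber_card_eq_multinomial (m : ι → ℕ) (hm : ∑ i, m i = Fintype.card α) :
    #{f : α → ι | ∀ i, #{a | f a = i} = m i} = Nat.multinomial univ m := by
  have := Nat.multinomial_spec univ m
  rw [hm, ← card_filter_fiber_card_eq_mul_prod_factorial m hm, mul_comm] at this
  exact (Nat.eq_of_mul_eq_mul_right (prod_pos fun i _ => (m i).factorial_pos) this).symm

omit [DecidableEq α] in
theorem sum_val_eq_sum_mul_card {k : ℕ} (w : α → Fin k) :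
    ∑ a, (w a : ℕ) = ∑ i : Fin k, (i : ℕ) * #{a | w a = i} := by
  rw [← sum_fiberwise univ w]
  refine sum_congr rfl fun i _ => ?_
  rw [sum_congr rfl fun a ha => congrArg Fin.val (mem_filter.1 ha).2, sum_const, smul_eq_mul,
    mul_comm]

end FiberCard

section Word

variable {n k : ℕ} [NeZero n]

def periodicExt (w : Fin n → Fin k) (t : ℕ) : ℕ := w t

theorem periodicExt_of_lt (w : Fin n → Fin k) {t : ℕ} (ht : t < n) :
    periodicExt w t = w ⟨t, ht⟩ := by
  simp [periodicExt, Fin.natCast_eq_mk ht]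

theorem periodicExt_add_self (w : Fin n → Fin k) (t : ℕ) :
    periodicExt w (n + t) = periodicExt w t := by
  simp [periodicExt]

theorem periodicExt_comp_addLeft (w : Fin n → Fin k) (r t : ℕ) :
    periodicExt (w ∘ Equiv.addLeft (r : Fin n)) t = periodicExt w (r + t) := by
  simp [periodicExt]

theorem sum_range_periodicExt (w : Fin n → Fin k) :
    ∑ t ∈ range n, periodicExt w t = ∑ j, (w j : ℕ) := by
  simp [periodicExt, ← Fin.sum_univ_eq_sum_range]

theorem walk_periodicExt_self {ℓ : ℕ} (w : Fin n → Fin k) (hsum : ∑ j, (w j : ℕ) + ℓ = n) :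
    walk (periodicExt w) n = -ℓ := by
  rw [walk_eq, ← Nat.cast_sum, sum_range_periodicExt]
  push_cast [← hsum]
  ring

theorem walk_periodicExt_add {ℓ : ℕ} (w : Fin n → Fin k) (hsum : ∑ j, (w j : ℕ) + ℓ = n)
    (t : ℕ) : walk (periodicExt w) (n + t) = walk (periodicExt w) t - ℓ := by
  rw [walk_add, walk_periodicExt_self w hsum]
  simp only [periodicExt_add_self]
  ring

theorem card_filter_isStrictPrefixMin_walk_rotate {ℓ : ℕ} (w : Fin n → Fin k)
    (hsum : ∑ j, (w j : ℕ) + ℓ = n) :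
    #{r ∈ range n | IsStrictPrefixMin (walk (periodicExt (w ∘ Equiv.addLeft ((r : ℕ) : Fin n)))) n}
      = ℓ := by
  have hdrift := walk_periodicExt_add w hsum
  rw [← card_filter_isStrictPrefixMin_add (walk_sub_one_le _) (NeZero.pos n) hdrift]
  refine congrArg card (filter_congr fun r hr => ?_)
  have hrot : walk (periodicExt (w ∘ Equiv.addLeft (r : Fin n))) =
      fun t => walk (periodicExt w) (r + t) - walk (periodicExt w) r := by
    funext t
    rw [walk_add (periodicExt w), add_sub_cancel_left]
    exact congrArg (walk · t) (funext (periodicExt_comp_addLeft w r))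
  rw [hrot, isStrictPrefixMin_shift_iff hdrift (mem_range.1 hr).le]

def degSeq (ℓ : ℕ) (w : Fin n → Fin k) (i : ℕ) : ℕ :=
  if i = 0 then ℓ else if i ≤ n then periodicExt w (i - 1) else 0

variable {ℓ : ℕ} {w : Fin n → Fin k}

@[simp]
theorem degSeq_zero : degSeq ℓ w 0 = ℓ := rfl

theorem degSeq_succ {t : ℕ} (ht : t < n) : degSeq ℓ w (t + 1) = periodicExt w t := by
  simp [degSeq, Nat.succ_le_of_lt ht]

theorem degSeq_of_lt {i : ℕ} (hi : n < i) : degSeq ℓ w i = 0 := by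
  rw [degSeq, if_neg (by omega), if_neg hi.not_ge]

theorem sum_range_degSeq {t : ℕ} (ht : t ≤ n) :
    ∑ i ∈ range (t + 1), degSeq ℓ w i = ℓ + ∑ j ∈ range t, periodicExt w j := by
  rw [sum_range_succ', degSeq_zero, add_comm]
  exact congrArg _ (sum_congr rfl fun j hj => degSeq_succ (by simp at hj; omega))

theorem degSeq_injective (ℓ : ℕ) : Function.Injective (degSeq ℓ : (Fin n → Fin k) → ℕ → ℕ) := by
  intro w w' h
  funext j
  have := congrFun h (j + 1)
  rw [degSeq_succ j.isLt, degSeq_succ j.isLt, periodicExt_of_lt _ j.isLt,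
    periodicExt_of_lt _ j.isLt] at this
  exact Fin.ext this

theorem isTreeDeg_degSeq_iff (hsum : ∑ j, (w j : ℕ) + ℓ = n) :
    IsTreeDeg n (degSeq ℓ w) ↔ IsStrictPrefixMin (walk (periodicExt w)) n := by
  have hprefix : (∀ i, 1 ≤ i → i ≤ n → i ≤ ∑ j ∈ range i, degSeq ℓ w j) ↔
      ∀ t < n, t + 1 ≤ ℓ + ∑ j ∈ range t, periodicExt w j := by
    constructor
    · intro h t ht
      simpa [sum_range_degSeq ht.le] using h (t + 1) (by omega) ht
    · intro h i hi hin
      obtain ⟨t, rfl⟩ := Nat.exists_eq_add_of_le' hi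
      rw [sum_range_degSeq (by omega)]
      exact h t (by omega)
  have htotal : ∑ i ∈ range (n + 1), degSeq ℓ w i = n := by
    rw [sum_range_degSeq le_rfl, sum_range_periodicExt]
    omega
  have hvanish : ∀ i, n < i → degSeq ℓ w i = 0 := fun i hi => degSeq_of_lt hi
  rw [IsTreeDeg, and_iff_right hvanish, and_iff_right htotal, hprefix]
  simp only [IsStrictPrefixMin, walk_periodicExt_self w hsum, walk_eq]
  refine forall₂_congr fun t _ => ?_
  rw [← Nat.cast_sum]
  omega

theorem card_filter_degSeq (i : ℕ) :
    #{j ∈ Icc 1 n | degSeq ℓ w j = i} = #{j | (w j : ℕ) = i} := by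
  refine card_nbij' (fun j => ((j - 1 : ℕ) : Fin n)) (fun j => j + 1) ?_ ?_ ?_ ?_
  · intro j hj
    simp only [coe_filter, mem_Icc, Set.mem_ofPred_eq] at hj
    obtain ⟨⟨h1, hn⟩, hj⟩ := hj
    rw [← Nat.sub_add_cancel h1, degSeq_succ (by omega)] at hj
    simpa [periodicExt] using hj
  · intro j hj
    simp only [coe_filter, mem_Icc, Set.mem_ofPred_eq, mem_univ, true_and] at hj ⊢
    rw [degSeq_succ j.isLt, periodicExt_of_lt _ j.isLt]
    exact ⟨⟨by omega, j.isLt⟩, hj⟩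
  · intro j hj
    simp only [coe_filter, mem_Icc, Set.mem_ofPred_eq] at hj
    change ((j - 1 : ℕ) : Fin n).val + 1 = j
    rw [Fin.val_natCast, Nat.mod_eq_of_lt (by omega)]
    omega
  · intro j _
    simp

end Word

def wordsWithContent (n : ℕ) (m : ℕ → ℕ) : Finset (Fin n → Fin (n + 1)) :=
  {w | ∀ i : Fin (n + 1), #{j | w j = i} = m i}

section Content

variable {n ℓ : ℕ} {m : ℕ → ℕ}

theorem card_wordsWithContent (hm : ∑ i ∈ range (n + 1), m i = n) :
    #(wordsWithContent n m) = Nat.multinomial (range (n + 1)) m := by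
  have := card_filter_fiber_card_eq_multinomial (fun i : Fin (n + 1) => m i)
    (by rw [Fin.sum_univ_eq_sum_range m, hm, Fintype.card_fin])
  convert this using 2
  · ext w
    simp only [wordsWithContent, mem_filter]
  · simp only [Nat.multinomial, Fin.sum_univ_eq_sum_range m,
      Fin.prod_univ_eq_prod_range (fun i => (m i)!)]

theorem comp_perm_mem_wordsWithContent {w : Fin n → Fin (n + 1)} (hw : w ∈ wordsWithContent n m)
    (σ : Equiv.Perm (Fin n)) : w ∘ σ ∈ wordsWithContent n m := by
  simpa [wordsWithContent, card_filter_comp_perm] using hw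

theorem sum_val_of_mem_wordsWithContent {w : Fin n → Fin (n + 1)}
    (hw : w ∈ wordsWithContent n m) : ∑ j, (w j : ℕ) = ∑ i ∈ range (n + 1), i * m i := by
  rw [sum_val_eq_sum_mul_card, ← Fin.sum_univ_eq_sum_range (fun i => i * m i)]
  simp_all [wordsWithContent]

variable [NeZero n]

theorem forall_card_filter_degSeq_eq_iff (hm' : ∀ i, n < i → m i = 0) (w : Fin n → Fin (n + 1)) :
    (∀ i, #{j ∈ Icc 1 n | degSeq ℓ w j = i} = m i) ↔ w ∈ wordsWithContent n m := by
  simp only [card_filter_degSeq, wordsWithContent, mem_filter, mem_univ, true_and]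
  refine ⟨fun h i => by simpa [Fin.ext_iff] using h i, fun h i => ?_⟩
  rcases le_or_gt i n with hi | hi
  · simpa [Fin.ext_iff] using h ⟨i, by omega⟩
  · rw [hm' i hi, card_eq_zero, filter_eq_empty_iff]
    intro j _
    have := (w j).isLt
    omega

theorem exists_degSeq_eq {d : ℕ → ℕ} (hd : IsTreeDeg n d) :
    ∃ w : Fin n → Fin (n + 1), degSeq (d 0) w = d := by
  obtain ⟨hvanish, htotal, -⟩ := hd
  have hle : ∀ i ≤ n, d i ≤ n := fun i hi =>
    htotal ▸ single_le_sum (fun _ _ => Nat.zero_le _) (mem_range.2 (Nat.lt_succ_of_le hi))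
  refine ⟨fun j => ⟨d (j + 1), Nat.lt_succ_of_le (hle _ j.isLt)⟩, funext fun i => ?_⟩
  rcases Nat.eq_zero_or_pos i with rfl | hi
  · rfl
  rcases le_or_gt i n with hin | hin
  · obtain ⟨t, rfl⟩ := Nat.exists_eq_add_of_le' hi
    rw [degSeq_succ (by omega), periodicExt_of_lt _ (by omega)]
  · rw [degSeq_of_lt hin, hvanish i hin]

open Classical in
noncomputable def treeWords (n ℓ : ℕ) (m : ℕ → ℕ) [NeZero n] : Finset (Fin n → Fin (n + 1)) :=
  {w ∈ wordsWithContent n m | IsTreeDeg n (degSeq ℓ w)}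

theorem mem_treeWords {w : Fin n → Fin (n + 1)} :
    w ∈ treeWords n ℓ m ↔ w ∈ wordsWithContent n m ∧ IsTreeDeg n (degSeq ℓ w) := by
  classical
  unfold treeWords
  exact mem_filter

theorem natCard_treeDegSeqs (hm' : ∀ i, n < i → m i = 0) :
    Nat.card {d : ℕ → ℕ // IsTreeDeg n d ∧ d 0 = ℓ ∧
      ∀ i, #{j ∈ Icc 1 n | d j = i} = m i} = #(treeWords n ℓ m) := by
  have himage : {d : ℕ → ℕ | IsTreeDeg n d ∧ d 0 = ℓ ∧ ∀ i, #{j ∈ Icc 1 n | d j = i} = m i} =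
      degSeq ℓ '' (treeWords n ℓ m : Set (Fin n → Fin (n + 1))) := by
    ext d
    simp only [Set.mem_image, mem_coe, mem_treeWords, Set.mem_ofPred_eq]
    constructor
    · rintro ⟨hd, h0, hcount⟩
      obtain ⟨w, hw⟩ := exists_degSeq_eq hd
      rw [h0] at hw
      rw [← hw] at hd hcount
      exact ⟨w, ⟨(forall_card_filter_degSeq_eq_iff hm' w).1 hcount, hd⟩, hw⟩
    · rintro ⟨w, ⟨hw, hd⟩, rfl⟩
      exact ⟨hd, degSeq_zero, (forall_card_filter_degSeq_eq_iff hm' w).2 hw⟩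
  rw [← Set.ncard_coe_finset, ← Set.ncard_image_of_injective _ (degSeq_injective ℓ), ← himage,
    ← Nat.card_coe_set_eq]
  rfl

theorem treeWords_eq_empty (hc : (∑ i ∈ range (n + 1), i * m i) + ℓ ≠ n) :
    treeWords n ℓ m = ∅ := by
  refine eq_empty_of_forall_notMem fun w hw => hc ?_
  obtain ⟨hw, hd⟩ := mem_treeWords.1 hw
  rw [← sum_val_of_mem_wordsWithContent hw, ← sum_range_periodicExt, add_comm,
    ← sum_range_degSeq le_rfl]
  exact hd.2.1

theorem card_range_mul_card_treeWords (hc : (∑ i ∈ range (n + 1), i * m i) + ℓ = n) :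
    n * #(treeWords n ℓ m) = ℓ * #(wordsWithContent n m) := by
  set W := wordsWithContent n m
  have hsum : ∀ w ∈ W, ∑ j, (w j : ℕ) + ℓ = n := fun w hw => by
    rw [sum_val_of_mem_wordsWithContent hw, hc]
  have hrow : ∀ r ∈ range n,
      #{w ∈ W | w ∘ Equiv.addLeft (r : Fin n) ∈ treeWords n ℓ m} = #(treeWords n ℓ m) := by
    intro r _
    refine card_nbij' (· ∘ Equiv.addLeft (r : Fin n)) (· ∘ (Equiv.addLeft (r : Fin n)).symm)
      (fun w hw => (mem_filter.1 hw).2) (fun v hv => ?_) (fun w _ => ?_) (fun v _ => ?_)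
    · have hvW : v ∈ W := (mem_treeWords.1 hv).1
      have hv' : (v ∘ (Equiv.addLeft (r : Fin n)).symm) ∘ Equiv.addLeft (r : Fin n) = v :=
        funext fun j => by simp
      refine mem_coe.2 (mem_filter.2 ⟨comp_perm_mem_wordsWithContent hvW _, ?_⟩)
      rw [hv']
      exact mem_coe.1 hv
    · exact funext fun j => by simp
    · exact funext fun j => by simp
  have hcol : ∀ w ∈ W,
      #{r ∈ range n | w ∘ Equiv.addLeft ((r : ℕ) : Fin n) ∈ treeWords n ℓ m} = ℓ := by
    intro w hw
    refine (congrArg card (filter_congr fun r _ => ?_)).trans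
      (card_filter_isStrictPrefixMin_walk_rotate w (hsum w hw))
    have hrot := comp_perm_mem_wordsWithContent hw (Equiv.addLeft (r : Fin n))
    rw [mem_treeWords, and_iff_right hrot, isTreeDeg_degSeq_iff (hsum _ hrot)]
  calc n * #(treeWords n ℓ m)
      = ∑ r ∈ range n, #{w ∈ W | w ∘ Equiv.addLeft (r : Fin n) ∈ treeWords n ℓ m} := by
        rw [sum_congr rfl hrow, sum_const, card_range, smul_eq_mul]
    _ = ∑ w ∈ W, #{r ∈ range n | w ∘ Equiv.addLeft ((r : ℕ) : Fin n) ∈ treeWords n ℓ m} := by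
        simp only [card_filter]
        exact sum_comm
    _ = ℓ * #W := by rw [sum_congr rfl hcol, sum_const, smul_eq_mul, mul_comm]

end Content

/-- Kreweras-type count: the number of plane trees with `n+1` nodes, root of degree `ℓ`,
and exactly `m i` non-root nodes of degree `i` for each `i`, is
`(ℓ/n)·n!/(m_0!·m_1!⋯)` if `m_1 + 2m_2 + ⋯ = n - ℓ`, and `0` otherwise. -/
theorem kreweras_count (n ℓ : ℕ) (m : ℕ → ℕ) (hn : 1 ≤ n)
    (hm : ∑ i ∈ Finset.range (n + 1), m i = n) (hm' : ∀ i, n < i → m i = 0) :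
    n * Nat.card {d : ℕ → ℕ // IsTreeDeg n d ∧ d 0 = ℓ ∧
        ∀ i, ((Finset.Icc 1 n).filter fun j => d j = i).card = m i} =
      if (∑ i ∈ Finset.range (n + 1), i * m i) + ℓ = n then
        ℓ * Nat.multinomial (Finset.range (n + 1)) m
      else 0 := by
  have : NeZero n := NeZero.of_pos hn
  rw [natCard_treeDegSeqs hm']
  split_ifs with hc
  · rw [card_range_mul_card_treeWords hc, card_wordsWithContent hm]
  · rw [treeWords_eq_empty hc, card_empty, mul_zero]
end

section
/- For all n ≥ 0 and k ≥ 1, the modular Catalan numbers satisfy the interlacing inequalities M_{k-1,n} ≤ C_{k,n} ≤ M_{k,n}, where C_{k,n} counts plane trees with n+1 nodes whose non-root nodes have degree less than k, and M_{k,n} counts plane trees with n+1 nodes all of whose nodes have degree at most k. -/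
open Finset

namespace IsTreeDeg

variable {n : ℕ} {d : ℕ → ℕ}

lemma apply_le (hd : IsTreeDeg n d) (i : ℕ) : d i ≤ n := by
  by_cases hi : i ≤ n
  · calc d i ≤ ∑ j ∈ range (n + 1), d j :=
          single_le_sum (fun _ _ => Nat.zero_le _) (mem_range.mpr (Nat.lt_succ_of_le hi))
      _ = n := hd.2.1
  · simp [hd.1 i (by omega)]

lemma finite_subtype (n : ℕ) (P : (ℕ → ℕ) → Prop) :
    Finite {d : ℕ → ℕ // IsTreeDeg n d ∧ P d} := by
  refine Finite.of_injective
    (fun x (i : Fin (n + 1)) => (⟨x.1 i, Nat.lt_succ_of_le (x.2.1.apply_le i)⟩ : Fin (n + 1))) ?_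
  intro a b hab
  ext i
  by_cases hi : i ≤ n
  · exact congrArg Fin.val (congrFun hab ⟨i, Nat.lt_succ_of_le hi⟩)
  · rw [a.2.1.1 i (by omega), b.2.1.1 i (by omega)]

end IsTreeDeg

namespace TreeDeg

variable {n k : ℕ} {d : ℕ → ℕ}

/-- In terms of the Łukasiewicz path `e i = d_0 + ⋯ + d_{i-1} - i`, this is the first `p` with
`e (p + 1) < v`. -/
noncomputable def hitTime (d : ℕ → ℕ) (v : ℕ) : ℕ :=
  sInf {p | ∑ j ∈ range (p + 1), d j ≤ p + v}

lemma mem_hitTime_set (hd : IsTreeDeg n d) (v : ℕ) :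
    n ∈ {p | ∑ j ∈ range (p + 1), d j ≤ p + v} := by
  simp only [Set.mem_ofPred_eq, hd.2.1]
  omega

lemma hitTime_le (hd : IsTreeDeg n d) (v : ℕ) : hitTime d v ≤ n :=
  Nat.sInf_le (mem_hitTime_set hd v)

lemma sum_range_hitTime_le (hd : IsTreeDeg n d) (v : ℕ) :
    ∑ j ∈ range (hitTime d v + 1), d j ≤ hitTime d v + v :=
  Nat.sInf_mem ⟨n, mem_hitTime_set hd v⟩

lemma lt_sum_range_of_lt_hitTime {v p : ℕ} (h : p < hitTime d v) :
    p + v < ∑ j ∈ range (p + 1), d j :=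
  not_le.mp (Nat.notMem_of_lt_sInf (s := {p | ∑ j ∈ range (p + 1), d j ≤ p + v}) h)

lemma hitTime_antitone (hd : IsTreeDeg n d) : Antitone (hitTime d) := fun v w hvw =>
  Nat.sInf_le ((sum_range_hitTime_le hd v).trans (by omega))

lemma add_le_sum_range_hitTime_of_ne_zero {v : ℕ} (h : hitTime d v ≠ 0) :
    hitTime d v + v ≤ ∑ j ∈ range (hitTime d v), d j := by
  obtain ⟨p, hp⟩ := Nat.exists_eq_succ_of_ne_zero h
  have := lt_sum_range_of_lt_hitTime (d := d) (v := v) (hp ▸ Nat.lt_succ_self p)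
  rw [hp, Nat.succ_eq_add_one]
  omega

lemma add_le_sum_range_hitTime {v : ℕ} (hv : v ≤ d 0) :
    hitTime d v + v ≤ ∑ j ∈ range (hitTime d v + 1), d j := by
  by_cases h : hitTime d v = 0
  · simpa [h] using hv
  · have := add_le_sum_range_hitTime_of_ne_zero h
    rw [sum_range_succ]
    omega

/-- The path moves down by at most one per step, so it hits level `v - 1` exactly. -/
lemma sum_range_hitTime (hd : IsTreeDeg n d) {v : ℕ} (hv : v ≤ d 0) :
    ∑ j ∈ range (hitTime d v + 1), d j = hitTime d v + v :=
  (sum_range_hitTime_le hd v).antisymm (add_le_sum_range_hitTime hv)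

lemma apply_hitTime (hd : IsTreeDeg n d) {v : ℕ} (hv : v ≤ d 0) (h : hitTime d v ≠ 0) :
    d (hitTime d v) = 0 := by
  have := add_le_sum_range_hitTime_of_ne_zero h
  have := sum_range_hitTime hd hv
  rw [sum_range_succ] at this
  omega

lemma hitTime_injOn (hd : IsTreeDeg n d) : Set.InjOn (hitTime d) (Set.Iic (d 0)) :=
  fun v hv w hw h => by
    have := (sum_range_hitTime hd hv).symm.trans (h ▸ sum_range_hitTime hd hw)
    omega

noncomputable def marks (k : ℕ) (d : ℕ → ℕ) : Finset ℕ :=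
  (Icc 1 (d 0 / k)).image fun j => hitTime d (k * j)

lemma mul_le_of_mem_Icc (hk : 0 < k) {j : ℕ} (hj : j ∈ Icc 1 (d 0 / k)) : k * j ≤ d 0 := by
  rw [mul_comm, ← Nat.le_div_iff_mul_le hk]
  exact (mem_Icc.mp hj).2

lemma hitTime_mul_injOn (hd : IsTreeDeg n d) (hk : 0 < k) :
    Set.InjOn (fun j => hitTime d (k * j)) (Icc 1 (d 0 / k)) :=
  (hitTime_injOn hd).comp (mul_right_injective₀ hk.ne').injOn fun _ hj =>
    Set.mem_Iic.mpr (mul_le_of_mem_Icc hk hj)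

lemma card_marks (hd : IsTreeDeg n d) (hk : 0 < k) : #(marks k d) = d 0 / k := by
  rw [marks, card_image_of_injOn (hitTime_mul_injOn hd hk), Nat.card_Icc, Nat.add_sub_cancel]

lemma marks_subset_range (hd : IsTreeDeg n d) : marks k d ⊆ range (n + 1) := by
  intro p hp
  obtain ⟨j, -, rfl⟩ := mem_image.mp hp
  exact mem_range.mpr (Nat.lt_succ_of_le (hitTime_le hd _))

def rootMod (k : ℕ) (d : ℕ → ℕ) : ℕ → ℕ := Function.update d 0 (d 0 % k)

lemma rootMod_eq_zero_of_mem_marks (hd : IsTreeDeg n d) (hk : 0 < k) {p : ℕ}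
    (hp : p ∈ marks k d) : rootMod k d p = 0 := by
  obtain ⟨j, hj, rfl⟩ := mem_image.mp hp
  have hkj : k * j ≤ d 0 := mul_le_of_mem_Icc hk hj
  by_cases h0 : hitTime d (k * j) = 0
  · have := sum_range_hitTime hd hkj
    rw [h0] at this ⊢
    simp only [zero_add, range_one, sum_singleton] at this
    simp [rootMod, this]
  · rw [rootMod, Function.update_of_ne h0, apply_hitTime hd hkj h0]

lemma rootMod_lt (hd : IsTreeDeg n d) (hk : 0 < k) (hC : ∀ i, 1 ≤ i → i ≤ n → d i < k)
    (p : ℕ) : rootMod k d p < k := by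
  by_cases h0 : p = 0
  · simpa [rootMod, h0] using Nat.mod_lt _ hk
  rw [rootMod, Function.update_of_ne h0]
  by_cases hp : p ≤ n
  · exact hC p (Nat.pos_of_ne_zero h0) hp
  · rw [hd.1 p (by omega)]
    exact hk

noncomputable def encode (k : ℕ) (d : ℕ → ℕ) (p : ℕ) : ℕ :=
  rootMod k d p + if p ∈ marks k d then k else 0

lemma sum_range_encode {i : ℕ} (hi : 0 < i) :
    ∑ p ∈ range i, encode k d p + k * (d 0 / k) =
      ∑ p ∈ range i, d p + k * #(range i ∩ marks k d) := by
  have h0 : 0 ∈ range i := mem_range.mpr hi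
  simp only [encode, sum_add_distrib, rootMod, sum_update_of_mem h0, sum_ite_mem, sum_const,
    smul_eq_mul, sum_eq_add_sum_sdiff_singleton_of_mem h0 d]
  have := Nat.div_add_mod (d 0) k
  ring_nf
  omega

/-- The marks at or after `i` are those for `j ≤ m` (`hitTime` is antitone), so `i` is not past
the one for `m`. -/
lemma add_mul_le_sum_range (hd : IsTreeDeg n d) (hk : 0 < k) {i : ℕ} (hi : 1 ≤ i) (hin : i ≤ n) :
    i + k * (d 0 / k - #(range i ∩ marks k d)) ≤ ∑ p ∈ range i, d p := by
  set m := d 0 / k - #(range i ∩ marks k d)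
  by_cases hm : m = 0
  · simpa [hm] using hd.2.2 i hi hin
  have hmi : i ≤ hitTime d (k * m) := by
    by_contra! hlt
    have hsub : (Icc m (d 0 / k)).image (fun j => hitTime d (k * j)) ⊆ range i ∩ marks k d := by
      intro p hp
      obtain ⟨j, hj, rfl⟩ := mem_image.mp hp
      have hj' := mem_Icc.mp hj
      refine mem_inter.mpr ⟨mem_range.mpr ?_, mem_image.mpr ⟨j, mem_Icc.mpr ⟨by omega, hj'.2⟩, rfl⟩⟩
      exact (hitTime_antitone hd (Nat.mul_le_mul_left k hj'.1)).trans_lt hlt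
    have hcard := card_le_card hsub
    rw [card_image_of_injOn ((hitTime_mul_injOn hd hk).mono fun j hj => by
      simp only [coe_Icc, Set.mem_Icc] at hj ⊢; omega), Nat.card_Icc] at hcard
    omega
  have := lt_sum_range_of_lt_hitTime (d := d) (Nat.sub_one_lt_of_le hi hmi)
  rw [Nat.sub_add_cancel hi] at this
  omega

lemma encode_isTreeDeg (hd : IsTreeDeg n d) (hk : 0 < k) : IsTreeDeg n (encode k d) := by
  refine ⟨fun i hi => ?_, ?_, fun i hi hin => ?_⟩
  · have hmark : i ∉ marks k d := fun h => by
      have := mem_range.mp (marks_subset_range hd h)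
      omega
    simp [encode, hmark, rootMod, Function.update_of_ne (show i ≠ 0 by omega), hd.1 i hi]
  · have := sum_range_encode (d := d) (k := k) (i := n + 1) n.succ_pos
    rw [inter_eq_right.mpr (marks_subset_range hd), card_marks hd hk, hd.2.1] at this
    omega
  · have hsum := sum_range_encode (d := d) (k := k) hi
    have hslack := add_mul_le_sum_range hd hk hi hin
    have hc : #(range i ∩ marks k d) ≤ d 0 / k :=
      card_marks hd hk ▸ card_le_card inter_subset_right
    rw [Nat.mul_sub] at hslack
    have := Nat.mul_le_mul_left k hc
    omega

lemma encode_le (hd : IsTreeDeg n d) (hk : 0 < k) (hC : ∀ i, 1 ≤ i → i ≤ n → d i < k)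
    (p : ℕ) : encode k d p ≤ k := by
  unfold encode
  split_ifs with hp
  · simp [rootMod_eq_zero_of_mem_marks hd hk hp]
  · simpa using (rootMod_lt hd hk hC p).le

lemma mem_marks_iff (hd : IsTreeDeg n d) (hk : 0 < k) (hC : ∀ i, 1 ≤ i → i ≤ n → d i < k)
    (p : ℕ) : p ∈ marks k d ↔ encode k d p = k := by
  have := rootMod_lt hd hk hC p
  by_cases hp : p ∈ marks k d
  · simp [encode, hp, rootMod_eq_zero_of_mem_marks hd hk hp]
  · simp only [encode, hp, if_false, false_iff]
    omega

lemma encode_injOn (hk : 0 < k) :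
    Set.InjOn (encode k) {d | IsTreeDeg n d ∧ ∀ i, 1 ≤ i → i ≤ n → d i < k} := by
  intro d ⟨hd, hC⟩ d' ⟨hd', hC'⟩ h
  have hmarks : marks k d = marks k d' := by
    ext p
    rw [mem_marks_iff hd hk hC, mem_marks_iff hd' hk hC', h]
  have hrootMod : rootMod k d = rootMod k d' := by
    funext p
    have := congrFun h p
    simp only [encode, hmarks] at this
    omega
  have hdiv : d 0 / k = d' 0 / k := by rw [← card_marks hd hk, ← card_marks hd' hk, hmarks]
  funext p
  by_cases hp : p = 0
  · have hmod := congrFun hrootMod 0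
    simp only [rootMod, Function.update_self] at hmod
    rw [hp, ← Nat.div_add_mod (d 0) k, ← Nat.div_add_mod (d' 0) k, hdiv, hmod]
  · simpa [rootMod, Function.update_of_ne hp] using congrFun hrootMod p

end TreeDeg

/-- Interlacing inequalities `M_{k-1,n} ≤ C_{k,n} ≤ M_{k,n}`. -/
theorem motzkin_catalan_interlacing (n k : ℕ) (hk : 1 ≤ k) :
    Nat.card {d : ℕ → ℕ // IsTreeDeg n d ∧ ∀ i, i ≤ n → d i ≤ k - 1} ≤
      Nat.card {d : ℕ → ℕ // IsTreeDeg n d ∧ ∀ i, 1 ≤ i → i ≤ n → d i < k} ∧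
    Nat.card {d : ℕ → ℕ // IsTreeDeg n d ∧ ∀ i, 1 ≤ i → i ≤ n → d i < k} ≤
      Nat.card {d : ℕ → ℕ // IsTreeDeg n d ∧ ∀ i, i ≤ n → d i ≤ k} := by
  have := IsTreeDeg.finite_subtype n fun d => ∀ i, 1 ≤ i → i ≤ n → d i < k
  have := IsTreeDeg.finite_subtype n fun d => ∀ i, i ≤ n → d i ≤ k
  constructor
  · exact Nat.card_le_card_of_injective
      (fun d => ⟨d.1, d.2.1, fun i _ hin => by have := d.2.2 i hin; omega⟩)
      (Function.Injective.of_comp (f := Subtype.val) Subtype.val_injective)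
  · exact Nat.card_le_card_of_injective
      (fun d => ⟨TreeDeg.encode k d.1, TreeDeg.encode_isTreeDeg d.2.1 hk,
        fun i _ => TreeDeg.encode_le d.2.1 hk d.2.2 i⟩)
      (Function.Injective.of_comp (f := Subtype.val) (TreeDeg.encode_injOn hk).injective)
end

section
/- For n ≥ 1, k ≥ 1, ℓ ≥ 1, and any set I of nonnegative integers, the number of sequences (d_0,...,d_n) with d_0 = ℓ, d_1,...,d_n ∈ I, d_0+⋯+d_n = n, and d_0+⋯+d_{i-1} ≥ i for all i in {1,...,n}, equals (ℓ/n) times the coefficient of z^{n-ℓ} in (Σ_{i∈I} z^i)^n. -/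
-- `(t : Fin n)` is `t mod n`, so `fun t : ℕ => w t` is the periodic extension of `w : Fin n → ℕ`.
open Finset Fin.NatCast

def IsBallot (ℓ n : ℕ) (e : ℕ → ℕ) : Prop :=
  ∀ m < n, m < ℓ + ∑ j ∈ range m, e j

instance (ℓ n : ℕ) : DecidablePred (IsBallot ℓ n) :=
  fun _ => inferInstanceAs (Decidable (∀ m < n, _))

section PrefixMin

variable (T : ℕ → ℤ)

def prefixMin : ℕ → ℤ
  | 0 => T 0
  | m + 1 => min (prefixMin m) (T (m + 1))

variable {T}

theorem lt_prefixMin_iff {a : ℤ} {m : ℕ} : a < prefixMin T m ↔ ∀ i ≤ m, a < T i := by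
  induction m with
  | zero => simp [prefixMin]
  | succ m ih => simp [prefixMin, ih, Nat.le_succ_iff, or_imp, forall_and]

theorem prefixMin_le {i m : ℕ} (h : i ≤ m) : prefixMin T m ≤ T i :=
  not_lt.mp fun hlt => (lt_prefixMin_iff.mp hlt i h).false

theorem prefixMin_succ_of_skipFree (hT : ∀ m, T m - 1 ≤ T (m + 1)) (m : ℕ) :
    prefixMin T (m + 1) = prefixMin T m - if T (m + 1) < prefixMin T m then 1 else 0 := by
  have hmin := prefixMin_le (T := T) (le_refl m)
  have hstep := hT m
  simp only [prefixMin]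
  split_ifs <;> omega

theorem card_filter_lt_prefixMin (hT : ∀ m, T m - 1 ≤ T (m + 1)) {a b : ℕ} (hab : a ≤ b) :
    (#{j ∈ Ico a b | T (j + 1) < prefixMin T j} : ℤ) = prefixMin T a - prefixMin T b := by
  rw [natCast_card_filter, sum_Ico_eq_sum_range]
  have hstep (k : ℕ) : (if T (a + k + 1) < prefixMin T (a + k) then 1 else 0 : ℤ) =
      prefixMin T (a + k) - prefixMin T (a + (k + 1)) := by
    rw [← add_assoc, prefixMin_succ_of_skipFree hT]
    ring
  simp only [hstep, sum_range_sub' (fun k => prefixMin T (a + k)), add_zero,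
    Nat.add_sub_cancel' hab]

theorem prefixMin_add_period {N : ℕ} {c : ℤ} (hT : ∀ m, T (m + (N + 1)) = T m - c) (m : ℕ) :
    prefixMin T (m + (N + 1)) = min (prefixMin T N) (prefixMin T m - c) := by
  induction m with
  | zero =>
    have h0 := hT 0
    rw [zero_add] at h0
    rw [zero_add, prefixMin, prefixMin, h0]
  | succ m ih =>
    have hsucc : m + 1 + (N + 1) = m + (N + 1) + 1 := by ring
    rw [hsucc, prefixMin, ih, prefixMin, ← min_sub_sub_right, ← hT, hsucc, min_assoc]

end PrefixMin

section CycleLemma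

def lukasiewiczPath (e : ℕ → ℕ) (m : ℕ) : ℤ := ∑ t ∈ range m, ((e t : ℤ) - 1)

variable {e : ℕ → ℕ}

theorem lukasiewiczPath_eq_sum_sub (m : ℕ) :
    lukasiewiczPath e m = ∑ t ∈ range m, (e t : ℤ) - m := by
  simp [lukasiewiczPath, sum_sub_distrib]

theorem lukasiewiczPath_add (r m : ℕ) :
    lukasiewiczPath e (r + m) = lukasiewiczPath e r + lukasiewiczPath (fun t => e (r + t)) m :=
  sum_range_add _ _ _

theorem lukasiewiczPath_skipFree (m : ℕ) :
    lukasiewiczPath e m - 1 ≤ lukasiewiczPath e (m + 1) := by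
  simp only [lukasiewiczPath, sum_range_succ]
  linarith [(e m).cast_nonneg (α := ℤ)]

variable {ℓ n : ℕ}

theorem lukasiewiczPath_add_period (hper : ∀ t, e (t + n) = e t)
    (hsum : ∑ t ∈ range n, e t + ℓ = n) (m : ℕ) :
    lukasiewiczPath e (m + n) = lukasiewiczPath e m - ℓ := by
  have hshift : (fun t => e (n + t)) = e := funext fun t => by rw [add_comm, hper]
  rw [add_comm, lukasiewiczPath_add, hshift, lukasiewiczPath_eq_sum_sub n, ← Nat.cast_sum]
  omega

theorem isBallot_rotate_iff (r : ℕ) :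
    IsBallot ℓ n (fun t => e (r + t)) ↔
      ∀ m < n, lukasiewiczPath e r - ℓ < lukasiewiczPath e (r + m) := by
  refine forall₂_congr fun m _ => ?_
  rw [lukasiewiczPath_add, lukasiewiczPath_eq_sum_sub m, ← Nat.cast_sum]
  dsimp only
  omega

theorem isBallot_rotate_iff_lt_prefixMin {N : ℕ} (hper : ∀ t, e (t + (N + 1)) = e t)
    (hsum : ∑ t ∈ range (N + 1), e t + ℓ = N + 1) {r : ℕ} (hr : r < N + 1) :
    IsBallot ℓ (N + 1) (fun t => e (r + t)) ↔
      lukasiewiczPath e (N + r + 1) < prefixMin (lukasiewiczPath e) (N + r) := by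
  have hshift := lukasiewiczPath_add_period hper hsum
  rw [isBallot_rotate_iff, lt_prefixMin_iff, show N + r + 1 = r + (N + 1) by ring, hshift]
  constructor
  · intro h i hi
    rcases le_or_gt r i with hri | hir
    · simpa [Nat.add_sub_cancel' hri] using h (i - r) (by omega)
    · -- one period later the path is lower by `ℓ`, and `i + (N + 1)` lies in the window
      have hm : i + (N + 1) - r < N + 1 := by omega
      have := h _ hm
      rw [show r + (i + (N + 1) - r) = i + (N + 1) by omega, hshift] at this
      omega
  · exact fun h m hm => h (r + m) (by omega)

theorem card_isBallot_rotations (hper : ∀ t, e (t + n) = e t)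
    (hsum : ∑ t ∈ range n, e t + ℓ = n) :
    #{r : Fin n | IsBallot ℓ n (fun t => e (r + t))} = ℓ := by
  rcases n with _ | N
  · simp_all
  have hminima := card_filter_lt_prefixMin (T := lukasiewiczPath e) lukasiewiczPath_skipFree
    (Nat.le_add_right N (N + 1))
  rw [prefixMin_add_period (lukasiewiczPath_add_period hper hsum), min_eq_right (by omega),
    natCast_card_filter, sum_Ico_eq_sum_range, Nat.add_sub_cancel_left] at hminima
  zify
  rw [natCast_card_filter, Fin.sum_univ_eq_sum_range (fun r =>
    if IsBallot ℓ (N + 1) (fun t => e (r + t)) then (1 : ℤ) else 0),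
    sum_congr rfl fun r hr =>
    if_congr (isBallot_rotate_iff_lt_prefixMin hper hsum (mem_range.mp hr)) rfl rfl, hminima]
  omega

end CycleLemma

theorem card_mul_card_filter_eq_sum_card_translates {G α : Type*} [AddGroup G] [Fintype G]
    (W : Finset (G → α)) (hW : ∀ w ∈ W, ∀ r, (fun t => w (r + t)) ∈ W)
    (P : (G → α) → Prop) [DecidablePred P] :
    Fintype.card G * #{w ∈ W | P w} = ∑ w ∈ W, #{r : G | P fun t => w (r + t)} := by
  have htranslate (r : G) : #{w ∈ W | P fun t => w (r + t)} = #{w ∈ W | P w} := by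
    refine card_nbij' (fun w t => w (r + t)) (fun w t => w (-r + t)) ?_ ?_ ?_ ?_
    · intro w hw
      simp only [mem_coe, mem_filter] at hw ⊢
      exact ⟨hW w hw.1 r, hw.2⟩
    · intro w hw
      simp only [mem_coe, mem_filter, neg_add_cancel_left] at hw ⊢
      exact ⟨hW w hw.1 (-r), hw.2⟩
    · intro w _
      simp only [add_neg_cancel_left]
    · intro w _
      simp only [neg_add_cancel_left]
  calc Fintype.card G * #{w ∈ W | P w} = ∑ r : G, #{w ∈ W | P fun t => w (r + t)} := by
        simp [htranslate]
    _ = ∑ w ∈ W, #{r : G | P fun t => w (r + t)} := by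
        simp only [card_filter]
        exact sum_comm

def tuplesWithSum (I : Set ℕ) [DecidablePred (· ∈ I)] (n m : ℕ) : Finset (Fin n → ℕ) :=
  {w ∈ piAntidiag univ m | ∀ i, w i ∈ I}

section Tuples

variable {I : Set ℕ} [DecidablePred (· ∈ I)] {n : ℕ}

theorem mem_tuplesWithSum {m : ℕ} {w : Fin n → ℕ} :
    w ∈ tuplesWithSum I n m ↔ ∑ i, w i = m ∧ ∀ i, w i ∈ I := by
  simp [tuplesWithSum]

theorem coeff_indicator_pow (I : Set ℕ) [DecidablePred (· ∈ I)] (n m : ℕ) :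
    PowerSeries.coeff m ((PowerSeries.mk fun i => if i ∈ I then (1 : ℕ) else 0) ^ n) =
      #(tuplesWithSum I n m) := by
  rw [← Fin.prod_const, PowerSeries.coeff_prod, finsuppAntidiag, sum_map, tuplesWithSum,
    card_filter, ← sum_attach (piAntidiag univ m)]
  refine sum_congr rfl fun w _ => ?_
  simp only [PowerSeries.coeff_mk]
  rw [prod_boole]
  simp

variable [NeZero n]

theorem sum_range_comp_natCast {M : Type*} [AddCommMonoid M] (w : Fin n → M) :
    ∑ t ∈ range n, w t = ∑ i, w i := by
  simp [← Fin.sum_univ_eq_sum_range]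

theorem translate_mem_tuplesWithSum {m : ℕ} {w : Fin n → ℕ} (hw : w ∈ tuplesWithSum I n m)
    (r : Fin n) : (fun t => w (r + t)) ∈ tuplesWithSum I n m := by
  rw [mem_tuplesWithSum] at hw ⊢
  exact ⟨(Equiv.sum_comp (Equiv.addLeft r) w).trans hw.1, fun t => hw.2 _⟩

theorem card_isBallot_translates {ℓ : ℕ} {w : Fin n → ℕ} (hw : ∑ i, w i + ℓ = n) :
    #{r : Fin n | IsBallot ℓ n fun t => w (r + t)} = ℓ := by
  have h := card_isBallot_rotations (n := n) (e := fun t => w t) (by simp)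
    (by rwa [sum_range_comp_natCast])
  simpa using h

end Tuples

theorem forall_one_le_le_iff_forall_lt {n : ℕ} {Q : ℕ → Prop} :
    (∀ i, 1 ≤ i → i ≤ n → Q i) ↔ ∀ m < n, Q (m + 1) :=
  ⟨fun h m hm => h _ (by omega) hm, fun h i h1 h2 => by
    obtain ⟨m, rfl⟩ := Nat.exists_eq_add_of_le' h1
    exact h m (by omega)⟩

section Trees

variable {n : ℕ} [NeZero n]

def rootCons (ℓ : ℕ) (w : Fin n → ℕ) : ℕ → ℕ
  | 0 => ℓ
  | i + 1 => if i < n then w i else 0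

variable {ℓ : ℕ}

theorem sum_range_succ_rootCons (w : Fin n → ℕ) {i : ℕ} (hi : i ≤ n) :
    ∑ j ∈ range (i + 1), rootCons ℓ w j = ℓ + ∑ j ∈ range i, w j := by
  rw [sum_range_succ', add_comm]
  congr 1
  exact sum_congr rfl fun j hj => if_pos (by simp at hj; omega)

theorem rootCons_tail {d : ℕ → ℕ} (h0 : d 0 = ℓ) (hvan : ∀ i, n < i → d i = 0) :
    rootCons ℓ (fun i : Fin n => d (i + 1)) = d := by
  funext i
  rcases i with _ | i
  · exact h0.symm
  · simp only [rootCons]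
    split_ifs with hi
    · simp [Nat.mod_eq_of_lt hi]
    · exact (hvan _ (by omega)).symm

theorem tail_rootCons (w : Fin n → ℕ) : (fun i : Fin n => rootCons ℓ w (i + 1)) = w := by
  funext i
  simp [rootCons]

theorem rootCons_isTree_iff {I : Set ℕ} [DecidablePred (· ∈ I)] (hℓn : ℓ ≤ n) (w : Fin n → ℕ) :
    (IsTreeDeg n (rootCons ℓ w) ∧ rootCons ℓ w 0 = ℓ ∧
        ∀ i, 1 ≤ i → i ≤ n → rootCons ℓ w i ∈ I) ↔
      w ∈ {w ∈ tuplesWithSum I n (n - ℓ) | IsBallot ℓ n fun t => w t} := by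
  have hvan : ∀ i, n < i → rootCons ℓ w i = 0 := by
    rintro (_ | i) hi
    · omega
    · exact if_neg (by omega)
  have hsum : ℓ + ∑ i, w i = n ↔ ∑ i, w i = n - ℓ := by omega
  have hballot : (∀ m < n, m + 1 ≤ ∑ i ∈ range (m + 1), rootCons ℓ w i) ↔
      IsBallot ℓ n fun t => w t :=
    forall₂_congr fun m hm => by
      rw [sum_range_succ_rootCons w hm.le]
      dsimp only
      omega
  have hI : (∀ m < n, rootCons ℓ w (m + 1) ∈ I) ↔ ∀ i, w i ∈ I :=
    ⟨fun h i => by simpa [rootCons] using h i i.isLt, fun h m hm => by simp [rootCons, hm, h]⟩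
  simp only [IsTreeDeg, mem_filter, mem_tuplesWithSum, sum_range_succ_rootCons w le_rfl,
    sum_range_comp_natCast, forall_one_le_le_iff_forall_lt, hballot, hI, hsum]
  exact ⟨fun h => ⟨⟨h.1.2.1, h.2.2⟩, h.1.2.2⟩, fun h => ⟨⟨hvan, h.1.1, h.2⟩, rfl, h.1.2⟩⟩

theorem card_trees_eq_card_isBallot {I : Set ℕ} [DecidablePred (· ∈ I)] (hℓn : ℓ ≤ n) :
    Nat.card {d : ℕ → ℕ // IsTreeDeg n d ∧ d 0 = ℓ ∧ ∀ i, 1 ≤ i → i ≤ n → d i ∈ I} =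
      #{w ∈ tuplesWithSum I n (n - ℓ) | IsBallot ℓ n fun t => w t} := by
  rw [← Nat.card_eq_finsetCard]
  refine Nat.card_congr
    { toFun d := ⟨fun i => d.1 (i + 1), (rootCons_isTree_iff hℓn _).mp ?_⟩
      invFun w := ⟨rootCons ℓ w.1, (rootCons_isTree_iff hℓn _).mpr w.2⟩
      left_inv d := Subtype.ext (rootCons_tail d.2.2.1 d.2.1.1)
      right_inv w := Subtype.ext (tail_rootCons (ℓ := ℓ) w.1) }
  rw [rootCons_tail d.2.2.1 d.2.1.1]
  exact d.2

end Trees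

theorem trees_with_degrees_in_set_general (n ℓ : ℕ) (I : Set ℕ) [DecidablePred (· ∈ I)]
    (hn : 1 ≤ n) (hℓn : ℓ ≤ n) :
    n * Nat.card {d : ℕ → ℕ // IsTreeDeg n d ∧ d 0 = ℓ ∧ ∀ i, 1 ≤ i → i ≤ n → d i ∈ I} =
      ℓ * PowerSeries.coeff (n - ℓ)
        ((PowerSeries.mk fun i => if i ∈ I then (1 : ℕ) else 0) ^ n) := by
  have : NeZero n := ⟨by omega⟩
  rw [card_trees_eq_card_isBallot hℓn, coeff_indicator_pow]
  calc n * #{w ∈ tuplesWithSum I n (n - ℓ) | IsBallot ℓ n fun t => w t}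
      = ∑ w ∈ tuplesWithSum I n (n - ℓ), #{r : Fin n | IsBallot ℓ n fun t => w (r + t)} := by
        have h := card_mul_card_filter_eq_sum_card_translates (tuplesWithSum I n (n - ℓ))
          (fun w hw => translate_mem_tuplesWithSum hw)
          (fun v : Fin n → ℕ => IsBallot ℓ n fun t => v t)
        rwa [Fintype.card_fin] at h
    _ = ∑ _w ∈ tuplesWithSum I n (n - ℓ), ℓ := sum_congr rfl fun w hw => by
        have hsum := (mem_tuplesWithSum.mp hw).1
        exact card_isBallot_translates (by omega)
    _ = ℓ * #(tuplesWithSum I n (n - ℓ)) := by rw [sum_const, smul_eq_mul, mul_comm]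

/-- Proposition `C_I`: the number of plane trees with `n+1` nodes, root of degree `ℓ`,
and all non-root degrees in `I`, equals `(ℓ/n)·[z^{n-ℓ}] (∑_{i∈I} z^i)^n`. -/
theorem trees_with_degrees_in_set (n k ℓ : ℕ) (I : Set ℕ) [DecidablePred (· ∈ I)]
    (hn : 1 ≤ n) (hk : 1 ≤ k) (hℓ : 1 ≤ ℓ) (hℓn : ℓ ≤ n) :
    n * Nat.card {d : ℕ → ℕ // IsTreeDeg n d ∧ d 0 = ℓ ∧ ∀ i, 1 ≤ i → i ≤ n → d i ∈ I} =
      ℓ * PowerSeries.coeff (n - ℓ)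
        ((PowerSeries.mk fun i => if i ∈ I then (1 : ℕ) else 0) ^ n) :=
  trees_with_degrees_in_set_general n ℓ I hn hℓn
end

section
/- For n ≥ 1 and r ≥ 1, the number of plane trees with n+1 nodes, of which exactly r are internal (degree ≥ 1), equals the Narayana number N(n,r) = (1/n)·C(n,r)·C(n,r-1). -/
/-!
Encode a sequence by its walk `i ↦ ∑_{j<i} (d_j - 1)`: a sequence `d_0, …, d_n` with sum `n` is the
degree sequence of a plane tree iff the walk stays nonnegative up to `n` (it ends at `-1` at
`n + 1`). Cycle lemma: of the `n + 1` cyclic shifts of a sequence with sum `n`, exactly one has this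
property, the one starting at the first minimum of the walk. Shifting preserves the number `r` of
nonzero entries, so `(n + 1)` times the number of trees is the number of sequences with sum `n` and
`r` nonzero entries, which is `C(n+1, r) · C(n-1, r-1)` by stars and bars. The Narayana formula
follows from `r · C(n+1, r) = (n+1) · C(n, r-1)` and `r · C(n, r) = n · C(n-1, r-1)`.
-/

open Finset

def IsDegSeq (n : ℕ) (d : ℕ → ℕ) : Prop :=
  (∀ i, n < i → d i = 0) ∧ ∑ i ∈ range (n + 1), d i = n

lemma IsTreeDeg.isDegSeq {n : ℕ} {d : ℕ → ℕ} (h : IsTreeDeg n d) : IsDegSeq n d :=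
  ⟨h.1, h.2.1⟩

section CyclicShift

variable {n : ℕ}

def cyclicShift (n : ℕ) (t : Fin (n + 1)) (d : ℕ → ℕ) (j : ℕ) : ℕ :=
  if h : j < n + 1 then d (⟨j, h⟩ + t : Fin (n + 1)) else 0

lemma cyclicShift_of_lt {t : Fin (n + 1)} {d : ℕ → ℕ} {j : ℕ} (h : j < n + 1) :
    cyclicShift n t d j = d ((j + t) % (n + 1)) := by
  simp [cyclicShift, h, Fin.val_add]

lemma cyclicShift_cyclicShift (s t : Fin (n + 1)) (d : ℕ → ℕ) :
    cyclicShift n s (cyclicShift n t d) = cyclicShift n (s + t) d := by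
  funext j
  by_cases h : j < n + 1
  · simp only [cyclicShift, dif_pos h, Fin.is_lt, dite_true, Fin.eta, add_assoc]
  · simp only [cyclicShift, dif_neg h]

lemma cyclicShift_zero {d : ℕ → ℕ} (hd : ∀ i, n < i → d i = 0) : cyclicShift n 0 d = d := by
  funext j
  by_cases h : j < n + 1
  · simp only [cyclicShift, dif_pos h, Fin.add_zero]
  · simp only [cyclicShift, dif_neg h, hd j (by omega)]

lemma cyclicShift_neg_cyclicShift (t : Fin (n + 1)) {d : ℕ → ℕ} (hd : ∀ i, n < i → d i = 0) :
    cyclicShift n (-t) (cyclicShift n t d) = d := by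
  rw [cyclicShift_cyclicShift, neg_add_cancel, cyclicShift_zero hd]

lemma sum_comp_cyclicShift {M : Type*} [AddCommMonoid M] (φ : ℕ → M) (t : Fin (n + 1))
    (d : ℕ → ℕ) :
    ∑ i ∈ range (n + 1), φ (cyclicShift n t d i) = ∑ i ∈ range (n + 1), φ (d i) := by
  simp only [← Fin.sum_univ_eq_sum_range, cyclicShift, Fin.is_lt, dite_true, Fin.eta]
  exact Equiv.sum_comp (Equiv.addRight t) (fun i => φ (d i))

lemma card_filter_cyclicShift_ne_zero (t : Fin (n + 1)) (d : ℕ → ℕ) :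
    #{i ∈ range (n + 1) | cyclicShift n t d i ≠ 0} = #{i ∈ range (n + 1) | d i ≠ 0} := by
  simpa only [card_filter] using sum_comp_cyclicShift (fun x => if x ≠ 0 then 1 else 0) t d

lemma IsDegSeq.cyclicShift {d : ℕ → ℕ} (h : IsDegSeq n d) (t : Fin (n + 1)) :
    IsDegSeq n (_root_.cyclicShift n t d) :=
  ⟨fun _ hi => dif_neg (by omega), (sum_comp_cyclicShift id t d).trans h.2⟩

end CyclicShift

section Height

variable {n : ℕ} {d : ℕ → ℕ}

def height (n : ℕ) (d : ℕ → ℕ) (i : ℕ) : ℤ :=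
  ∑ j ∈ range i, ((d (j % (n + 1)) : ℤ) - 1)

lemma height_of_le {i : ℕ} (hi : i ≤ n + 1) : height n d i = ∑ j ∈ range i, (d j : ℤ) - i := by
  rw [height, sum_sub_distrib]
  congr 1
  · exact sum_congr rfl fun j hj => by rw [Nat.mod_eq_of_lt (by simp at hj; omega)]
  · simp

lemma height_period_add (i : ℕ) : height n d (n + 1 + i) = height n d (n + 1) + height n d i := by
  simp only [height, sum_range_add, Nat.add_mod_left]

lemma IsDegSeq.height_eq_neg_one (h : IsDegSeq n d) : height n d (n + 1) = -1 := by
  rw [height_of_le le_rfl, ← Nat.cast_sum, h.2]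
  push_cast
  ring

lemma height_cyclicShift (t : Fin (n + 1)) (i : ℕ) :
    height n (cyclicShift n t d) i = height n d (t + i) - height n d t := by
  rw [height, height, height, sum_range_add, add_sub_cancel_left]
  refine sum_congr rfl fun j _ => ?_
  rw [cyclicShift_of_lt (Nat.mod_lt _ n.succ_pos), Nat.mod_add_mod, add_comm j]

lemma isTreeDeg_iff_height_nonneg :
    IsTreeDeg n d ↔ IsDegSeq n d ∧ ∀ i ≤ n, 0 ≤ height n d i := by
  have height_nonneg_iff (i : ℕ) (hi : i ≤ n) : 0 ≤ height n d i ↔ i ≤ ∑ j ∈ range i, d j := by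
    rw [height_of_le (by omega), sub_nonneg, ← Nat.cast_sum, Nat.cast_le]
  constructor
  · rintro ⟨hzero, hsum, hprefix⟩
    refine ⟨⟨hzero, hsum⟩, fun i hi => (height_nonneg_iff i hi).2 ?_⟩
    rcases Nat.eq_zero_or_pos i with rfl | hpos
    · exact Nat.zero_le _
    · exact hprefix i hpos hi
  · rintro ⟨⟨hzero, hsum⟩, hheight⟩
    exact ⟨hzero, hsum, fun i _ hi => (height_nonneg_iff i hi).1 (hheight i hi)⟩

end Height

section CycleLemma

variable {n : ℕ}

lemma exists_first_min {α : Type*} [LinearOrder α] (f : ℕ → α) (n : ℕ) :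
    ∃ t ≤ n, (∀ j ≤ n, f t ≤ f j) ∧ ∀ j < t, f t < f j := by
  have hex : ∃ t, t ≤ n ∧ ∀ j ≤ n, f t ≤ f j := by
    obtain ⟨t, ht, hmin⟩ := (range (n + 1)).exists_min_image f ⟨0, by simp⟩
    exact ⟨t, by simpa [Nat.lt_succ_iff] using ht, fun j hj => hmin j (by simp; omega)⟩
  obtain ⟨htn, hmin⟩ := Nat.find_spec hex
  refine ⟨Nat.find hex, htn, hmin, fun j hj => ?_⟩
  obtain ⟨k, hk, hlt⟩ : ∃ k ≤ n, f k < f j := by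
    simpa [hj.le.trans htn] using Nat.find_min hex hj
  exact (hmin k hk).trans_lt hlt

lemma eq_zero_of_isTreeDeg_cyclicShift {e : ℕ → ℕ} (he : IsTreeDeg n e) {t : Fin (n + 1)}
    (ht : IsTreeDeg n (cyclicShift n t e)) : t = 0 := by
  rw [isTreeDeg_iff_height_nonneg] at he ht
  by_contra hne
  -- after `n + 1 - t` steps the shifted walk is at `-1 - height n e t < 0`
  have htpos : 0 < (t : ℕ) := Fin.pos_iff_ne_zero.mpr hne
  have hshift := ht.2 (n + 1 - t) (by omega)
  rw [height_cyclicShift, Nat.add_sub_cancel' t.is_lt.le, he.1.height_eq_neg_one] at hshift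
  have := he.2 t t.is_le
  omega

lemma exists_isTreeDeg_cyclicShift {d : ℕ → ℕ} (hd : IsDegSeq n d) :
    ∃ t : Fin (n + 1), IsTreeDeg n (cyclicShift n t d) := by
  -- Start at the first minimum `t`: steps up to `n` stay above it, and a wrapped-around
  -- step `n + 1 + j` is at `height n d j - 1 ≥ height n d t` because `j < t`.
  obtain ⟨t, htn, hmin, hfirst⟩ := exists_first_min (height n d) n
  refine ⟨⟨t, by omega⟩, isTreeDeg_iff_height_nonneg.2 ⟨hd.cyclicShift _, fun i _ => ?_⟩⟩
  rw [height_cyclicShift, sub_nonneg]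
  change height n d t ≤ height n d (t + i)
  rcases le_or_gt (t + i) n with h | h
  · exact hmin _ h
  · obtain ⟨j, hj⟩ : ∃ j, t + i = n + 1 + j := ⟨t + i - (n + 1), by omega⟩
    rw [hj, height_period_add, hd.height_eq_neg_one]
    have := hfirst j (by omega)
    omega

theorem card_isDegSeq_eq_card_isTreeDeg_mul (n r : ℕ) :
    Nat.card {d // IsDegSeq n d ∧ #{i ∈ range (n + 1) | d i ≠ 0} = r} =
      Nat.card {d // IsTreeDeg n d ∧ #{i ∈ range (n + 1) | d i ≠ 0} = r} * (n + 1) := by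
  let shift (p : {e // IsTreeDeg n e ∧ #{i ∈ range (n + 1) | e i ≠ 0} = r} × Fin (n + 1)) :
      {d // IsDegSeq n d ∧ #{i ∈ range (n + 1) | d i ≠ 0} = r} :=
    ⟨cyclicShift n p.2 p.1, p.1.2.1.isDegSeq.cyclicShift _,
      (card_filter_cyclicShift_ne_zero _ _).trans p.1.2.2⟩
  have hinj : Function.Injective shift := by
    intro ⟨⟨e, he, _⟩, t⟩ ⟨⟨e', he', _⟩, t'⟩ hshift
    have h : cyclicShift n t e = cyclicShift n t' e' := congrArg Subtype.val hshift
    have he'e : e' = cyclicShift n (-t' + t) e := by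
      rw [← cyclicShift_cyclicShift, h, cyclicShift_neg_cyclicShift _ he'.1]
    obtain rfl : t' = t := by
      rw [← neg_add_eq_zero]
      exact eq_zero_of_isTreeDeg_cyclicShift he (he'e ▸ he')
    rw [neg_add_cancel, cyclicShift_zero he.1] at he'e
    subst he'e
    rfl
  have hsurj : Function.Surjective shift := by
    rintro ⟨d, hd, hr⟩
    obtain ⟨t, ht⟩ := exists_isTreeDeg_cyclicShift hd
    refine ⟨(⟨cyclicShift n t d, ht, (card_filter_cyclicShift_ne_zero _ _).trans hr⟩, -t), ?_⟩
    exact Subtype.ext (cyclicShift_neg_cyclicShift t hd.1)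
  rw [← Nat.card_eq_of_bijective shift ⟨hinj, hsurj⟩, Nat.card_prod, Nat.card_fin]

end CycleLemma

lemma finite_sum_eq (α : Type*) [Fintype α] [DecidableEq α] (k : ℕ) :
    Finite {g : α → ℕ // ∑ a, g a = k} :=
  .of_equiv _ (Sym.equivNatSumOfFintype α k)

lemma card_sum_eq_multichoose (α : Type*) [Fintype α] [DecidableEq α] (k : ℕ) :
    Nat.card {g : α → ℕ // ∑ a, g a = k} = (Fintype.card α).multichoose k := by
  rw [← Nat.card_congr (Sym.equivNatSumOfFintype α k), Sym.natCard_sym_eq_multichoose,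
    Nat.card_eq_fintype_card]

section StarsAndBars

variable {ι : Type*} [DecidableEq ι]

def succOn (S : Finset ι) (g : S → ℕ) (i : ι) : ℕ :=
  if h : i ∈ S then g ⟨i, h⟩ + 1 else 0

lemma filter_succOn_ne_zero {s S : Finset ι} (hS : S ⊆ s) (g : S → ℕ) :
    {i ∈ s | succOn S g i ≠ 0} = S := by
  ext i
  by_cases h : i ∈ S
  · simp [succOn, h, hS h]
  · simp [succOn, h]

lemma sum_succOn {s S : Finset ι} (hS : S ⊆ s) (g : S → ℕ) :
    ∑ i ∈ s, succOn S g i = ∑ x, g x + #S := by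
  rw [← sum_subset hS fun i _ hi => show succOn S g i = 0 from dif_neg hi, ← sum_coe_sort S]
  simp [succOn, sum_add_distrib]

theorem card_support_sum_eq (s : Finset ι) {m r : ℕ} (hrm : r ≤ m) :
    Nat.card {d : ι → ℕ // (∀ i ∉ s, d i = 0) ∧ ∑ i ∈ s, d i = m ∧ #{i ∈ s | d i ≠ 0} = r} =
      (#s).choose r * r.multichoose (m - r) := by
  let glue (p : Σ S : powersetCard r s, {g : S.1 → ℕ // ∑ x, g x = m - r}) :
      {d : ι → ℕ // (∀ i ∉ s, d i = 0) ∧ ∑ i ∈ s, d i = m ∧ #{i ∈ s | d i ≠ 0} = r} :=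
    have hS := mem_powersetCard.1 p.1.2
    ⟨succOn p.1 p.2, fun i hi => dif_neg fun h => hi (hS.1 h),
      by rw [sum_succOn hS.1, p.2.2, hS.2]; omega, by rw [filter_succOn_ne_zero hS.1, hS.2]⟩
  have hinj : Function.Injective glue := by
    intro ⟨⟨S, hS⟩, ⟨g, _⟩⟩ ⟨⟨S', hS'⟩, ⟨g', _⟩⟩ hglue
    have h : succOn S g = succOn S' g' := congrArg Subtype.val hglue
    obtain rfl : S = S' := by
      rw [← filter_succOn_ne_zero (mem_powersetCard.1 hS).1 g,
        ← filter_succOn_ne_zero (mem_powersetCard.1 hS').1 g', h]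
    obtain rfl : g = g' := funext fun x => by simpa [succOn] using congrFun h x
    rfl
  have hsurj : Function.Surjective glue := by
    intro ⟨d, hzero, hsum, hr⟩
    set S := {i ∈ s | d i ≠ 0}
    have hS : S ⊆ s := filter_subset _ _
    have hd : succOn S (fun x => d x - 1) = d := by
      funext i
      by_cases hi : i ∈ S
      · have := (mem_filter.1 hi).2
        simp only [succOn, dif_pos hi]
        omega
      · simp only [succOn, dif_neg hi]
        by_cases his : i ∈ s
        · simpa [S, his, eq_comm] using hi
        · exact (hzero i his).symm
    have hg : ∑ x : S, (d x - 1) = m - r := by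
      have := sum_succOn hS fun x => d x - 1
      rw [hd, hsum, hr] at this
      omega
    exact ⟨⟨⟨S, mem_powersetCard.2 ⟨hS, hr⟩⟩, ⟨_, hg⟩⟩, Subtype.ext hd⟩
  have := fun S : powersetCard r s => finite_sum_eq S.1 (m - r)
  rw [← Nat.card_eq_of_bijective glue ⟨hinj, hsurj⟩, Nat.card_sigma]
  simp only [card_sum_eq_multichoose, Fintype.card_coe]
  rw [sum_congr rfl fun S _ => by rw [(mem_powersetCard.1 S.2).2], sum_const, card_univ,
    Fintype.card_coe, card_powersetCard, smul_eq_mul]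

end StarsAndBars

lemma card_filter_ne_zero_le_sum {ι : Type*} (s : Finset ι) (f : ι → ℕ) :
    #{i ∈ s | f i ≠ 0} ≤ ∑ i ∈ s, f i :=
  calc #{i ∈ s | f i ≠ 0} = ∑ i ∈ s with f i ≠ 0, 1 := card_eq_sum_ones _
    _ ≤ ∑ i ∈ s with f i ≠ 0, f i :=
      sum_le_sum fun _ hi => Nat.one_le_iff_ne_zero.2 (mem_filter.1 hi).2
    _ = ∑ i ∈ s, f i := sum_filter_ne_zero _

theorem card_isDegSeq_add_one (n r : ℕ) (hr : r ≤ n) :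
    Nat.card {d // IsDegSeq (n + 1) d ∧ #{i ∈ range (n + 1 + 1) | d i ≠ 0} = r + 1} =
      (n + 2).choose (r + 1) * n.choose r := by
  have hsupp (d : ℕ → ℕ) : (∀ i, n + 1 < i → d i = 0) ↔ ∀ i ∉ range (n + 1 + 1), d i = 0 := by
    simp only [mem_range, not_lt]
    rfl
  rw [Nat.card_congr (Equiv.subtypeEquivRight fun d => by rw [IsDegSeq, hsupp, and_assoc]),
    card_support_sum_eq _ (by omega), card_range, Nat.multichoose_eq,
    show r + 1 + (n + 1 - (r + 1)) - 1 = n by omega, show n + 1 - (r + 1) = n - r by omega,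
    Nat.choose_symm hr]

lemma add_one_mul_choose_mul_choose (n r : ℕ) :
    (n + 1) * ((n + 2).choose (r + 1) * n.choose r) =
      (n + 1).choose (r + 1) * (n + 1).choose r * (n + 2) :=
  calc (n + 1) * ((n + 2).choose (r + 1) * n.choose r)
      = (n + 2).choose (r + 1) * ((n + 1) * n.choose r) := by ring
    _ = (n + 1).choose (r + 1) * ((n + 2).choose (r + 1) * (r + 1)) := by
      rw [Nat.add_one_mul_choose_eq]; ring
    _ = (n + 1).choose (r + 1) * (n + 1).choose r * (n + 2) := by
      rw [← Nat.add_one_mul_choose_eq]; ring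

theorem narayana_count_general (n r : ℕ) (hr : 1 ≤ r) :
    n * Nat.card {d : ℕ → ℕ // IsTreeDeg n d ∧
        ((Finset.range (n + 1)).filter fun i => d i ≠ 0).card = r} =
      n.choose r * n.choose (r - 1) := by
  rcases lt_or_ge n r with hnr | hrn
  · have : IsEmpty {d : ℕ → ℕ // IsTreeDeg n d ∧ #{i ∈ range (n + 1) | d i ≠ 0} = r} :=
      ⟨fun ⟨d, hd, hcard⟩ => by
        have := card_filter_ne_zero_le_sum (range (n + 1)) d
        rw [hd.2.1, hcard] at this
        omega⟩
    simp [Nat.choose_eq_zero_of_lt hnr]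
  obtain ⟨r, rfl⟩ := Nat.exists_eq_add_of_le' hr
  obtain ⟨n, rfl⟩ := Nat.exists_eq_add_of_le' (hr.trans hrn)
  have hcount := card_isDegSeq_add_one n r (by omega)
  rw [card_isDegSeq_eq_card_isTreeDeg_mul] at hcount
  refine Nat.eq_of_mul_eq_mul_right (Nat.succ_pos (n + 1)) ?_
  rw [Nat.add_sub_cancel, mul_assoc, hcount, add_one_mul_choose_mul_choose]

/-- The number of plane trees with `n+1` nodes and exactly `r` internal nodes is the
Narayana number `N(n,r) = (1/n)·C(n,r)·C(n,r-1)`. -/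
theorem narayana_count (n r : ℕ) (hn : 1 ≤ n) (hr : 1 ≤ r) :
    n * Nat.card {d : ℕ → ℕ // IsTreeDeg n d ∧
        ((Finset.range (n + 1)).filter fun i => d i ≠ 0).card = r} =
      n.choose r * n.choose (r - 1) :=
  narayana_count_general n r hr
end

section
/- For k ≥ 1, n ≥ 1, and r ≥ 1, the number of plane trees with n+1 nodes, exactly r internal nodes, and every non-root node of degree less than k+1 equals Σ_{0 ≤ j ≤ (n-r)/k} ((-1)^j / n)·C(n, r-1)·C(r-1, j)·C(n-jk, r). -/
open Finset

namespace ModularCatalan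

lemma sum_range_add_mod {M : Type*} [AddCommMonoid M] {n : ℕ} (hn : 0 < n) (f : ℕ → M) (i : ℕ) :
    ∑ j ∈ range n, f ((i + j) % n) = ∑ j ∈ range n, f j := by
  have : NeZero n := ⟨hn.ne'⟩
  rw [← Fin.sum_univ_eq_sum_range (fun j => f ((i + j) % n)), ← Fin.sum_univ_eq_sum_range f]
  refine Fintype.sum_equiv (Equiv.addLeft (Fin.ofNat n i)) _ _ fun j => ?_
  simp [Fin.val_add, Nat.add_mod]

lemma sum_range_choose_eq_choose_succ (m q : ℕ) :
    ∑ w ∈ range m, w.choose q = m.choose (q + 1) := by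
  induction m with
  | zero => simp
  | succ m ih => rw [sum_range_succ, ih, Nat.choose_succ_succ', add_comm]

lemma sum_range_eq_sum_range_of_eq_zero {M : Type*} [AddCommMonoid M] {f : ℕ → M} {a b : ℕ}
    (ha : ∀ j, a ≤ j → f j = 0) (hb : ∀ j, b ≤ j → f j = 0) :
    ∑ j ∈ range a, f j = ∑ j ∈ range b, f j := by
  have key (a b : ℕ) (hb : ∀ j, b ≤ j → f j = 0) :
      ∑ j ∈ range (min a b), f j = ∑ j ∈ range a, f j :=
    sum_subset (range_subset_range.2 (min_le_left a b)) fun j hja hj =>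
      hb j (by grind)
  rw [← key a b hb, ← key b a ha, min_comm]

def IsBallot (n : ℕ) (b : ℕ → ℕ) : Prop := ∀ t, 1 ≤ t → t ≤ n → ∑ j ∈ range t, b j < t

instance (n : ℕ) : DecidablePred (IsBallot n) := fun b => by unfold IsBallot; infer_instance

def rotate (n i : ℕ) (b : ℕ → ℕ) (j : ℕ) : ℕ := if j < n then b ((i + j) % n) else 0

def walk (n : ℕ) (b : ℕ → ℕ) (t : ℕ) : ℤ := ∑ j ∈ range t, (b (j % n) : ℤ) - t

def windowMax (n : ℕ) (b : ℕ → ℕ) (i : ℕ) : ℤ :=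
  (Icc i (i + n)).sup' (nonempty_Icc.2 (Nat.le_add_right i n)) (walk n b)

section CycleLemma

variable {n : ℕ} {b : ℕ → ℕ}

lemma sum_range_rotate {t : ℕ} (ht : t ≤ n) (i : ℕ) :
    ∑ j ∈ range t, rotate n i b j = ∑ j ∈ range t, b ((i + j) % n) :=
  sum_congr rfl fun j hj => if_pos (by grind)

lemma sum_range_comp_rotate {M : Type*} [AddCommMonoid M] (hn : 0 < n) (f : ℕ → M) (i : ℕ) :
    ∑ j ∈ range n, f (rotate n i b j) = ∑ j ∈ range n, f (b j) := by
  refine (sum_congr rfl fun j hj => ?_).trans (sum_range_add_mod hn (fun j => f (b j)) i)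
  exact congrArg f (if_pos (mem_range.1 hj))

lemma rotate_rotate (i m : ℕ) : rotate n i (rotate n m b) = rotate n (m + i) b := by
  ext j
  simp only [rotate]
  split_ifs with h h'
  · rw [Nat.add_mod_mod, add_assoc]
  · exact absurd (Nat.mod_lt _ (by omega)) h'
  · rfl

lemma rotate_self (hb : ∀ j, n ≤ j → b j = 0) : rotate n n b = b := by
  ext j
  unfold rotate
  split_ifs with h
  · rw [Nat.add_mod_left, Nat.mod_eq_of_lt h]
  · exact (hb j (by omega)).symm

lemma walk_add (i t : ℕ) :
    walk n b (i + t) = walk n b i + ∑ j ∈ range t, (b ((i + j) % n) : ℤ) - t := by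
  simp only [walk, sum_range_add, Nat.cast_add]
  ring

lemma walk_le_walk_succ_add_one (t : ℕ) : walk n b t ≤ walk n b (t + 1) + 1 := by
  rw [walk_add]
  simp

lemma walk_add_period (hn : 0 < n) (t : ℕ) :
    walk n b (t + n) = walk n b t + ((∑ j ∈ range n, b j : ℕ) - n) := by
  rw [walk_add, sum_range_add_mod hn (fun j => (b j : ℤ)), Nat.cast_sum]
  ring

lemma isBallot_rotate_iff (i : ℕ) :
    IsBallot n (rotate n i b) ↔ ∀ t, 1 ≤ t → t ≤ n → walk n b (i + t) < walk n b i := by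
  refine forall_congr' fun t => imp_congr_right fun _ => imp_congr_right fun ht => ?_
  rw [sum_range_rotate ht, walk_add, ← Nat.cast_lt (α := ℤ), Nat.cast_sum]
  omega

lemma walk_le_windowMax {i u : ℕ} (h₁ : i ≤ u) (h₂ : u ≤ i + n) : walk n b u ≤ windowMax n b i :=
  le_sup' _ (mem_Icc.2 ⟨h₁, h₂⟩)

lemma windowMax_le_iff {i : ℕ} {c : ℤ} :
    windowMax n b i ≤ c ↔ ∀ u, i ≤ u → u ≤ i + n → walk n b u ≤ c := by
  simp [windowMax, sup'_le_iff]

lemma windowMax_lt_iff {i : ℕ} {c : ℤ} :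
    windowMax n b i < c ↔ ∀ u, i ≤ u → u ≤ i + n → walk n b u < c := by
  simp [windowMax, sup'_lt_iff]

lemma windowMax_add_period (hn : 0 < n) (i : ℕ) :
    windowMax n b (i + n) = windowMax n b i + ((∑ j ∈ range n, b j : ℕ) - n) := by
  refine le_antisymm (windowMax_le_iff.2 fun u h₁ h₂ => ?_) ?_
  · have := walk_add_period (b := b) hn (u - n)
    rw [Nat.sub_add_cancel (by omega)] at this
    linarith [walk_le_windowMax (n := n) (b := b) (u := u - n) (i := i) (by omega) (by omega)]
  · rw [← le_sub_iff_add_le, windowMax_le_iff]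
    intro u h₁ h₂
    linarith [walk_add_period (b := b) hn u,
      walk_le_windowMax (n := n) (b := b) (u := u + n) (i := i + n) (by omega) (by omega)]

section Deficient

variable (hn : 0 < n) (hs : ∑ j ∈ range n, b j < n)
include hn hs

lemma walk_add_period_lt (t : ℕ) : walk n b (t + n) < walk n b t := by
  rw [walk_add_period hn]
  have : ((∑ j ∈ range n, b j : ℕ) : ℤ) < n := by exact_mod_cast hs
  linarith

lemma windowMax_eq_max (i : ℕ) : windowMax n b i = max (walk n b i) (windowMax n b (i + 1)) := by
  refine le_antisymm (windowMax_le_iff.2 fun u h₁ h₂ => ?_) (max_le ?_ ?_)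
  · rcases h₁.eq_or_lt with rfl | h₁
    · exact le_max_left _ _
    · exact (walk_le_windowMax (by omega) (by omega)).trans (le_max_right _ _)
  · exact walk_le_windowMax le_rfl (by omega)
  · refine windowMax_le_iff.2 fun u h₁ h₂ => ?_
    rcases h₂.lt_or_eq with h₂ | rfl
    · exact walk_le_windowMax (by omega) (by omega)
    · exact (walk_add_period_lt hn hs (i + 1)).le.trans (walk_le_windowMax (by omega) (by omega))

lemma isBallot_rotate_iff_windowMax_lt (i : ℕ) :
    IsBallot n (rotate n i b) ↔ windowMax n b (i + 1) < walk n b i := by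
  rw [isBallot_rotate_iff, windowMax_lt_iff]
  refine ⟨fun h u h₁ h₂ => ?_, fun h t h₁ h₂ => h (i + t) (by omega) (by omega)⟩
  rcases h₂.lt_or_eq with h₂ | rfl
  · simpa [Nat.add_sub_cancel' (by omega : i ≤ u)] using h (u - i) (by omega) (by omega)
  · exact (walk_add_period_lt hn hs (i + 1)).trans (h 1 le_rfl hn)

lemma windowMax_sub_windowMax_succ (i : ℕ) :
    windowMax n b i - windowMax n b (i + 1) = if IsBallot n (rotate n i b) then 1 else 0 := by
  rw [windowMax_eq_max hn hs]
  simp only [isBallot_rotate_iff_windowMax_lt hn hs]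
  have := walk_le_walk_succ_add_one (n := n) (b := b) i
  have := walk_le_windowMax (n := n) (b := b) (i := i + 1) (u := i + 1) le_rfl (by omega)
  split_ifs <;> omega

end Deficient

/-- The cycle lemma. Rotation `i` is ballot iff `walk i` exceeds the walk on `(i, i + n]`; when
`∑ b < n` this is exactly when the window maximum drops (by one) from `i` to `i + 1`, and over a
period it drops by `n - ∑ b`. -/
theorem card_filter_isBallot_rotate (hn : 0 < n) (b : ℕ → ℕ) :
    #{i ∈ range n | IsBallot n (rotate n i b)} = n - ∑ j ∈ range n, b j := by
  rcases lt_or_ge (∑ j ∈ range n, b j) n with hs | hs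
  · have := sum_range_sub' (windowMax n b) n
    rw [sum_congr rfl fun i _ => windowMax_sub_windowMax_succ hn hs i, sum_boole] at this
    have hperiod := windowMax_add_period (b := b) hn 0
    rw [zero_add] at hperiod
    omega
  · rw [Nat.sub_eq_zero_of_le hs, card_eq_zero, filter_eq_empty_iff]
    intro i _ hb
    have := hb n hn le_rfl
    rw [sum_range_rotate le_rfl, sum_range_add_mod hn b] at this
    omega

end CycleLemma

theorem mul_card_filter_isBallot {n : ℕ} (hn : 0 < n) (S : Finset (ℕ → ℕ))
    (hS : ∀ b ∈ S, ∀ j, n ≤ j → b j = 0) (hrot : ∀ b ∈ S, ∀ i, rotate n i b ∈ S) :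
    n * #{b ∈ S | IsBallot n b} = ∑ b ∈ S, (n - ∑ j ∈ range n, b j) := by
  have hfiber (i : ℕ) (hi : i < n) :
      #{b ∈ S | IsBallot n (rotate n i b)} = #{b ∈ S | IsBallot n b} := by
    refine card_nbij' (rotate n i) (rotate n (n - i)) (fun b hb => ?_) (fun c hc => ?_)
      (fun b hb => ?_) (fun c hc => ?_)
    · simp only [mem_coe, mem_filter] at hb ⊢
      exact ⟨hrot b hb.1 i, hb.2⟩
    · simp only [mem_coe, mem_filter] at hc ⊢
      refine ⟨hrot c hc.1 _, ?_⟩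
      rw [rotate_rotate, Nat.sub_add_cancel hi.le, rotate_self (hS c hc.1)]
      exact hc.2
    · simp only [mem_coe, mem_filter] at hb
      rw [rotate_rotate, Nat.add_sub_cancel' hi.le, rotate_self (hS b hb.1)]
    · simp only [mem_coe, mem_filter] at hc
      rw [rotate_rotate, Nat.sub_add_cancel hi.le, rotate_self (hS c hc.1)]
  calc n * #{b ∈ S | IsBallot n b}
      = ∑ i ∈ range n, #{b ∈ S | IsBallot n (rotate n i b)} := by
        rw [sum_congr rfl fun i hi => hfiber i (mem_range.1 hi), sum_const, card_range,
          smul_eq_mul]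
    _ = ∑ b ∈ S, #{i ∈ range n | IsBallot n (rotate n i b)} := by
        simp only [card_filter]
        exact sum_comm
    _ = ∑ b ∈ S, (n - ∑ j ∈ range n, b j) :=
        sum_congr rfl fun b _ => card_filter_isBallot_rotate hn b

def extendByZero (n : ℕ) : (Fin n → ℕ) ↪ (ℕ → ℕ) where
  toFun f j := if h : j < n then f ⟨j, h⟩ else 0
  inj' f g h := funext fun i => by simpa using congrFun h i

lemma extendByZero_apply {n : ℕ} (f : Fin n → ℕ) (j : ℕ) :
    extendByZero n f j = if h : j < n then f ⟨j, h⟩ else 0 := rfl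

def boundedSeqs (n k : ℕ) : Finset (ℕ → ℕ) :=
  (Fintype.piFinset fun _ : Fin n => range (k + 1)).map (extendByZero n)

lemma mem_boundedSeqs {n k : ℕ} {b : ℕ → ℕ} :
    b ∈ boundedSeqs n k ↔ (∀ j, n ≤ j → b j = 0) ∧ ∀ j, b j ≤ k := by
  simp only [boundedSeqs, mem_map, Fintype.mem_piFinset, mem_range]
  constructor
  · rintro ⟨f, hf, rfl⟩
    refine ⟨fun j hj => dif_neg (by omega), fun j => ?_⟩
    rw [extendByZero_apply]
    split_ifs
    · exact Nat.lt_succ_iff.1 (hf _)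
    · exact Nat.zero_le _
  · rintro ⟨hsupp, hk⟩
    refine ⟨fun j => b j, fun j => Nat.lt_succ_of_le (hk j), funext fun j => ?_⟩
    rw [extendByZero_apply]
    split_ifs with h
    · rfl
    · exact (hsupp j (not_lt.1 h)).symm

def degSeqs (n k ρ : ℕ) : Finset (ℕ → ℕ) := {b ∈ boundedSeqs n k | #{j ∈ range n | b j ≠ 0} = ρ}

lemma rotate_mem_degSeqs {n k ρ : ℕ} (hn : 0 < n) {b : ℕ → ℕ} (hb : b ∈ degSeqs n k ρ) (i : ℕ) :
    rotate n i b ∈ degSeqs n k ρ := by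
  simp only [degSeqs, mem_filter, mem_boundedSeqs, card_filter] at hb ⊢
  refine ⟨⟨fun j hj => if_neg (by omega), fun j => ?_⟩, ?_⟩
  · unfold rotate
    split_ifs
    exacts [hb.1.2 _, Nat.zero_le k]
  · rw [sum_range_comp_rotate hn (fun x => if x ≠ 0 then 1 else 0)]
    exact hb.2

def ballotOfTree (n : ℕ) (d : ℕ → ℕ) (j : ℕ) : ℕ := if j < n then d (n - j) else 0

def treeOfBallot (n : ℕ) (b : ℕ → ℕ) (i : ℕ) : ℕ :=
  if i = 0 then n - ∑ j ∈ range n, b j else if i ≤ n then b (n - i) else 0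

def IsModularTree (n k r : ℕ) (d : ℕ → ℕ) : Prop :=
  IsTreeDeg n d ∧ (∀ i, 1 ≤ i → i ≤ n → d i ≤ k) ∧
    #{i ∈ range (n + 1) | d i ≠ 0} = r

section Trees

variable {n : ℕ} {d : ℕ → ℕ}

lemma sum_range_comp_ballotOfTree {M : Type*} [AddCommMonoid M] (f : ℕ → M) {t : ℕ}
    (ht : t ≤ n) :
    ∑ j ∈ range t, f (ballotOfTree n d j) = ∑ i ∈ Ico (n + 1 - t) (n + 1), f (d i) := by
  have := sum_Ico_reflect (fun i => f (d i)) 0 (show t ≤ n + 1 by omega)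
  rw [Nat.sub_zero, ← range_eq_Ico] at this
  rw [← this]
  exact sum_congr rfl fun j hj => congrArg f (if_pos (by grind))

lemma sum_range_ballotOfTree {t : ℕ} (ht : t ≤ n) :
    ∑ j ∈ range t, ballotOfTree n d j = ∑ i ∈ Ico (n + 1 - t) (n + 1), d i :=
  sum_range_comp_ballotOfTree id ht

lemma card_filter_ne_zero_range_succ (hd : d 0 ≠ 0) :
    #{i ∈ range (n + 1) | d i ≠ 0} = #{i ∈ Ico 1 (n + 1) | d i ≠ 0} + 1 := by
  rw [card_filter, card_filter, range_eq_Ico, sum_eq_sum_Ico_succ_bot (by omega), if_pos hd,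
    add_comm]

lemma card_filter_ne_zero_ballotOfTree :
    #{j ∈ range n | ballotOfTree n d j ≠ 0} = #{i ∈ Ico 1 (n + 1) | d i ≠ 0} := by
  rw [card_filter, card_filter,
    sum_range_comp_ballotOfTree (fun x => if x ≠ 0 then 1 else 0) le_rfl, Nat.add_sub_cancel_left]

lemma isTreeDeg_iff_isBallot :
    IsTreeDeg n d ↔ (∀ i, n < i → d i = 0) ∧ ∑ i ∈ range (n + 1), d i = n ∧
      IsBallot n (ballotOfTree n d) := by
  refine and_congr_right fun _ => and_congr_right fun htot => ⟨fun h t ht₁ ht₂ => ?_,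
    fun h i hi₁ hi₂ => ?_⟩
  · have hsplit := sum_range_add_sum_Ico d (m := n + 1 - t) (n := n + 1) (by omega)
    have := h (n + 1 - t) (by omega) (by omega)
    rw [sum_range_ballotOfTree ht₂]
    omega
  · have hsplit := sum_range_add_sum_Ico d (m := i) (n := n + 1) (by omega)
    have := h (n + 1 - i) (by omega) (by omega)
    rw [sum_range_ballotOfTree (by omega), Nat.sub_sub_self (by omega)] at this
    omega

lemma one_le_of_isTreeDeg (hn : 0 < n) (hd : IsTreeDeg n d) : 1 ≤ d 0 := by
  simpa using hd.2.2 1 le_rfl hn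

lemma ballotOfTree_mem {k r : ℕ} (hn : 0 < n) (hd : IsModularTree n k r d) :
    ballotOfTree n d ∈ {b ∈ degSeqs n k (r - 1) | IsBallot n b} := by
  obtain ⟨htree, hk, hr⟩ := hd
  have hroot := one_le_of_isTreeDeg hn htree
  rw [card_filter_ne_zero_range_succ (by omega)] at hr
  simp only [mem_filter, degSeqs, mem_boundedSeqs, card_filter_ne_zero_ballotOfTree]
  refine ⟨⟨⟨fun j hj => if_neg (by omega), fun j => ?_⟩, by omega⟩,
    (isTreeDeg_iff_isBallot.1 htree).2.2⟩
  unfold ballotOfTree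
  split_ifs
  exacts [hk _ (by omega) (by omega), Nat.zero_le k]

lemma ballotOfTree_treeOfBallot {b : ℕ → ℕ} (hb : ∀ j, n ≤ j → b j = 0) :
    ballotOfTree n (treeOfBallot n b) = b := by
  ext j
  unfold ballotOfTree treeOfBallot
  split_ifs <;> first | omega | (congr 1; omega) | exact (hb j (by omega)).symm

lemma treeOfBallot_mem {k r : ℕ} (hn : 0 < n) (hr : 1 ≤ r) {b : ℕ → ℕ}
    (hb : b ∈ {b ∈ degSeqs n k (r - 1) | IsBallot n b}) :
    IsModularTree n k r (treeOfBallot n b) := by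
  simp only [mem_filter, degSeqs, mem_boundedSeqs] at hb
  obtain ⟨⟨⟨hsupp, hk⟩, hr'⟩, hballot⟩ := hb
  have hroot : treeOfBallot n b 0 = n - ∑ j ∈ range n, b j := if_pos rfl
  have hs := hballot n hn le_rfl
  have hinv := ballotOfTree_treeOfBallot hsupp
  refine ⟨isTreeDeg_iff_isBallot.2 ⟨fun i hi => ?_, ?_, by rw [hinv]; exact hballot⟩,
    fun i hi₁ hi₂ => ?_, ?_⟩
  · unfold treeOfBallot
    rw [if_neg (by omega), if_neg (by omega)]
  · have := sum_range_ballotOfTree (n := n) (d := treeOfBallot n b) le_rfl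
    rw [hinv, Nat.add_sub_cancel_left] at this
    rw [range_eq_Ico, sum_eq_sum_Ico_succ_bot (by omega), ← this, hroot]
    omega
  · unfold treeOfBallot
    rw [if_neg (by omega), if_pos hi₂]
    exact hk _
  · rw [card_filter_ne_zero_range_succ (by omega), ← card_filter_ne_zero_ballotOfTree, hinv, hr']
    omega

lemma treeOfBallot_ballotOfTree (hd : IsTreeDeg n d) : treeOfBallot n (ballotOfTree n d) = d := by
  obtain ⟨hsupp, htot, -⟩ := hd
  have := sum_range_ballotOfTree (n := n) (d := d) le_rfl
  rw [Nat.add_sub_cancel_left] at this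
  rw [range_eq_Ico, sum_eq_sum_Ico_succ_bot (by omega), Nat.zero_add] at htot
  ext i
  rcases Nat.eq_zero_or_pos i with rfl | hi
  · rw [treeOfBallot, if_pos rfl, this]
    omega
  · by_cases h : i ≤ n
    · rw [treeOfBallot, if_neg hi.ne', if_pos h, ballotOfTree, if_pos (by omega),
        Nat.sub_sub_self h]
    · rw [treeOfBallot, if_neg hi.ne', if_neg h]
      exact (hsupp i (by omega)).symm

theorem card_isModularTree {k r : ℕ} (hn : 0 < n) (hr : 1 ≤ r) :
    Nat.card {d // IsModularTree n k r d} = #{b ∈ degSeqs n k (r - 1) | IsBallot n b} := by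
  rw [← Nat.card_eq_finsetCard]
  exact Nat.card_congr
    { toFun := fun d => ⟨ballotOfTree n d, ballotOfTree_mem hn d.2⟩
      invFun := fun b => ⟨treeOfBallot n b, treeOfBallot_mem hn hr b.2⟩
      left_inv := fun d => Subtype.ext (treeOfBallot_ballotOfTree d.2.1)
      right_inv := fun b => Subtype.ext (ballotOfTree_treeOfBallot
        (mem_boundedSeqs.1 (mem_filter.1 (mem_filter.1 b.2).1).1).1) }

end Trees

section Supports

variable {n k ρ : ℕ}

lemma mem_filter_ne_zero_iff {b : ℕ → ℕ} (hb : b ∈ boundedSeqs n k) {j : ℕ} :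
    j ∈ {j ∈ range n | b j ≠ 0} ↔ b j ≠ 0 := by
  rw [mem_filter, mem_range, and_iff_right_iff_imp]
  exact fun h => not_le.1 fun hj => h ((mem_boundedSeqs.1 hb).1 j hj)

def extendAlong {T : Finset ℕ} (e : Fin ρ ≃ T) (c : Fin ρ → ℕ) (j : ℕ) : ℕ :=
  if h : j ∈ T then c (e.symm ⟨j, h⟩) else 0

lemma filter_extendAlong_ne_zero {T : Finset ℕ} (hT : T ⊆ range n) (e : Fin ρ ≃ T)
    {c : Fin ρ → ℕ} (hc : ∀ i, 1 ≤ c i) : {j ∈ range n | extendAlong e c j ≠ 0} = T := by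
  ext j
  rw [mem_filter, mem_range, extendAlong]
  by_cases hj : j ∈ T
  · simp only [hj, dif_pos, iff_true]
    exact ⟨mem_range.1 (hT hj), Nat.one_le_iff_ne_zero.1 (hc _)⟩
  · simp [hj]

lemma sum_degSeqs_filter_support_eq {T : Finset ℕ} (hT : T ∈ powersetCard ρ (range n)) :
    ∑ b ∈ {b ∈ degSeqs n k ρ | {j ∈ range n | b j ≠ 0} = T}, (n - ∑ j ∈ range n, b j) =
      ∑ c ∈ Fintype.piFinset fun _ : Fin ρ => Icc 1 k, (n - ∑ i, c i) := by
  obtain ⟨hTn, hTρ⟩ := mem_powersetCard.1 hT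
  set e := (T.orderIsoOfFin hTρ).toEquiv
  refine sum_nbij' (fun b i => b (e i)) (extendAlong e)
    (fun b hb => ?_) (fun c hc => ?_) (fun b hb => ?_) (fun c hc => ?_) (fun b hb => ?_)
  all_goals simp only [mem_filter, degSeqs, Fintype.mem_piFinset, mem_Icc] at *
  · intro i
    have := (mem_filter_ne_zero_iff hb.1.1).1 (by rw [hb.2]; exact (e i).2)
    exact ⟨Nat.one_le_iff_ne_zero.2 this, (mem_boundedSeqs.1 hb.1.1).2 _⟩
  · have hsupp := filter_extendAlong_ne_zero hTn e fun i => (hc i).1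
    refine ⟨⟨mem_boundedSeqs.2 ⟨fun j hj => dif_neg fun hjT => ?_, fun j => ?_⟩, ?_⟩, hsupp⟩
    · exact absurd (mem_range.1 (hTn hjT)) (not_lt.2 hj)
    · unfold extendAlong
      split_ifs
      exacts [(hc _).2, Nat.zero_le k]
    · rw [hsupp, hTρ]
  · ext j
    by_cases hj : j ∈ T
    · simp only [extendAlong, hj, dif_pos]
      exact congrArg b (congrArg Subtype.val (e.apply_symm_apply ⟨j, hj⟩))
    · rw [extendAlong, dif_neg hj, eq_comm, ← not_ne_iff, ← mem_filter_ne_zero_iff hb.1.1, hb.2]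
      exact hj
  · ext i
    simp [extendAlong]
  · rw [← sum_filter_ne_zero, hb.2, ← sum_coe_sort T b]
    exact congrArg (n - ·) (Equiv.sum_comp e fun x : T => b x).symm

theorem sum_degSeqs (n k ρ : ℕ) :
    ∑ b ∈ degSeqs n k ρ, (n - ∑ j ∈ range n, b j) =
      n.choose ρ * ∑ c ∈ Fintype.piFinset fun _ : Fin ρ => Icc 1 k, (n - ∑ i, c i) := by
  rw [← sum_fiberwise_of_maps_to (g := fun b => {j ∈ range n | b j ≠ 0})
    (t := powersetCard ρ (range n)) fun b hb => ?_]
  · rw [sum_congr rfl fun T hT => sum_degSeqs_filter_support_eq hT, sum_const,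
      card_powersetCard, card_range, smul_eq_mul]
  · rw [degSeqs, mem_filter] at hb
    exact mem_powersetCard.2 ⟨filter_subset _ _, hb.2⟩

end Supports

section Compositions

lemma sum_Icc_choose_sub {m M : ℕ} (h : m ≤ M) (q : ℕ) :
    ∑ v ∈ Icc 1 M, (m - v).choose (q + 1) = m.choose (q + 2) := by
  rw [← sum_subset (Icc_subset_Icc_right h) fun v hv hv' => by
    rw [Nat.sub_eq_zero_of_le (by grind), Nat.choose_zero_succ]]
  rw [← Ico_add_one_right_eq_Icc, sum_Ico_reflect (fun w => w.choose (q + 1)) 1 le_rfl,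
    Nat.sub_self, Nat.add_sub_cancel, ← range_eq_Ico, sum_range_choose_eq_choose_succ]

/-- Weighted stars and bars: `m - ∑ c` counts the extra parts `t ≥ 1` with `t + ∑ c ≤ m`, so the
sum counts `ρ + 1` positive parts of total at most `m`, for any box `N` large enough. -/
theorem sum_piFinset_Icc_sub_sum {ρ : ℕ} (N : Fin ρ → ℕ) {m : ℕ} (hN : ∀ i, m ≤ N i) :
    ∑ c ∈ Fintype.piFinset fun i => Icc 1 (N i), (m - ∑ i, c i) = m.choose (ρ + 1) := by
  induction ρ generalizing m with
  | zero => simp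
  | succ ρ ih =>
    have hsplit := filter_piFinset_eq_map_consEquiv (fun i => Icc 1 (N i)) fun _ => True
    simp only [filter_true] at hsplit
    rw [hsplit, sum_map, sum_product]
    calc ∑ v ∈ Icc 1 (N 0), ∑ c ∈ Fintype.piFinset (Fin.tail fun i => Icc 1 (N i)),
          (m - ∑ i, (Fin.consEquiv (fun _ => ℕ)).toEmbedding (v, c) i)
        = ∑ v ∈ Icc 1 (N 0), (m - v).choose (ρ + 1) := sum_congr rfl fun v _ => by
          simp only [Equiv.coe_toEmbedding, Fin.consEquiv_apply, Fin.sum_cons, ← Nat.sub_sub]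
          exact ih (fun i => N i.succ) fun i => (Nat.sub_le m v).trans (hN _)
      _ = m.choose (ρ + 2) := sum_Icc_choose_sub (hN 0) ρ

/-- Lowering the parts in `J` by `k` leaves a box that still contains all compositions of
`n - #J * k`. -/
theorem sum_piFinset_Icc_filter_lt {ρ : ℕ} (n k : ℕ) (J : Finset (Fin ρ)) :
    ∑ c ∈ {c ∈ Fintype.piFinset fun _ : Fin ρ => Icc 1 (n + k) | ∀ i ∈ J, k < c i},
      (n - ∑ i, c i) = (n - #J * k).choose (ρ + 1) := by
  set δ : Fin ρ → ℕ := fun i => if i ∈ J then k else 0 with hδ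
  have hsumδ : ∑ i, δ i = #J * k := by
    rw [hδ, sum_ite_mem, univ_inter, sum_const, smul_eq_mul]
  rw [← sum_piFinset_Icc_sub_sum (fun i => n + k - δ i) fun i => by grind]
  refine sum_nbij' (fun c i => c i - δ i) (fun c i => c i + δ i) (fun c hc => ?_)
    (fun c hc => ?_) (fun c hc => ?_) (fun c hc => ?_) (fun c hc => ?_)
  all_goals simp only [mem_filter, Fintype.mem_piFinset, mem_Icc] at hc ⊢
  · intro i
    grind
  · exact ⟨fun i => by grind, fun i hi => by grind⟩
  · exact funext fun i => by grind
  · exact funext fun i => by grind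
  · have : ∑ i, c i = ∑ i, (c i - δ i) + ∑ i, δ i := by
      rw [← sum_add_distrib]
      exact sum_congr rfl fun i _ => by grind
    rw [this, hsumδ, Nat.sub_sub, add_comm]

/-- Inclusion–exclusion over the set of parts exceeding `k`. -/
theorem sum_piFinset_Icc_sub_sum_eq (n k ρ : ℕ) :
    ((∑ c ∈ Fintype.piFinset fun _ : Fin ρ => Icc 1 k, (n - ∑ i, c i) : ℕ) : ℤ) =
      ∑ j ∈ range (ρ + 1), (-1) ^ j * (ρ.choose j : ℤ) * ((n - j * k).choose (ρ + 1) : ℤ) := by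
  set B := Fintype.piFinset fun _ : Fin ρ => Icc 1 (n + k)
  have hB : (Fintype.piFinset fun _ : Fin ρ => Icc 1 k) = {c ∈ B | ∀ i, c i ≤ k} := by
    ext c
    simp only [B, mem_filter, Fintype.mem_piFinset, mem_Icc]
    exact ⟨fun h => ⟨fun i => ⟨(h i).1, by grind⟩, fun i => (h i).2⟩,
      fun h i => ⟨(h.1 i).1, h.2 i⟩⟩
  have hindicator (c : Fin ρ → ℕ) : (if ∀ i, c i ≤ k then 1 else 0 : ℤ) =
      ∑ J ∈ (univ : Finset (Fin ρ)).powerset, if ∀ i ∈ J, k < c i then (-1) ^ #J else 0 := by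
    rw [← sum_filter]
    have : {J ∈ (univ : Finset (Fin ρ)).powerset | ∀ i ∈ J, k < c i} =
        ({i | k < c i} : Finset (Fin ρ)).powerset := by
      ext J
      simp [subset_iff]
    rw [this, sum_powerset_neg_one_pow_card]
    simp [filter_eq_empty_iff]
  calc ((∑ c ∈ Fintype.piFinset fun _ : Fin ρ => Icc 1 k, (n - ∑ i, c i) : ℕ) : ℤ)
      = ∑ c ∈ B, (if ∀ i, c i ≤ k then 1 else 0 : ℤ) * (n - ∑ i, c i : ℕ) := by
        rw [hB, sum_filter, Nat.cast_sum]
        exact sum_congr rfl fun c _ => by split_ifs <;> simp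
    _ = ∑ J ∈ (univ : Finset (Fin ρ)).powerset,
          (-1) ^ #J * ((∑ c ∈ {c ∈ B | ∀ i ∈ J, k < c i}, (n - ∑ i, c i) : ℕ) : ℤ) := by
        simp only [hindicator, sum_mul, ite_mul, zero_mul]
        rw [sum_comm]
        refine sum_congr rfl fun J _ => ?_
        rw [sum_filter, Nat.cast_sum, mul_sum]
        exact sum_congr rfl fun c _ => by split_ifs <;> simp
    _ = ∑ j ∈ range (ρ + 1), (-1) ^ j * (ρ.choose j : ℤ) * ((n - j * k).choose (ρ + 1) : ℤ) := by
        simp only [B, sum_piFinset_Icc_filter_lt]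
        rw [sum_powerset_apply_card (fun j => (-1) ^ j * ((n - j * k).choose (ρ + 1) : ℤ)),
          card_univ, Fintype.card_fin]
        exact sum_congr rfl fun j _ => by rw [nsmul_eq_mul]; ring

end Compositions

end ModularCatalan

open ModularCatalan

/-- Refined modular Catalan number `C_{k+1,n,r}`: plane trees with `n+1` nodes,
exactly `r` internal nodes, and every non-root node of degree `< k+1`. -/
theorem refined_modular_catalan (n k r : ℕ) (hn : 1 ≤ n) (hk : 1 ≤ k) (hr : 1 ≤ r) :
    (n : ℤ) * Nat.card {d : ℕ → ℕ // IsTreeDeg n d ∧ (∀ i, 1 ≤ i → i ≤ n → d i ≤ k) ∧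
        ((Finset.range (n + 1)).filter fun i => d i ≠ 0).card = r} =
      ∑ j ∈ Finset.range ((n - r) / k + 1),
        (-1) ^ j * (n.choose (r - 1) : ℤ) * ((r - 1).choose j : ℤ) *
          ((n - j * k).choose r : ℤ) := by
  have hcount : n * Nat.card {d // IsModularTree n k r d} = n.choose (r - 1) *
      ∑ c ∈ Fintype.piFinset fun _ : Fin (r - 1) => Icc 1 k, (n - ∑ i, c i) := by
    rw [card_isModularTree hn hr, mul_card_filter_isBallot hn (degSeqs n k (r - 1))
      (fun b hb => (mem_boundedSeqs.1 (mem_filter.1 hb).1).1) fun b hb => rotate_mem_degSeqs hn hb,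
      sum_degSeqs]
  have hcount' := congrArg (Nat.cast : ℕ → ℤ) hcount
  rw [Nat.cast_mul, Nat.cast_mul, sum_piFinset_Icc_sub_sum_eq, Nat.sub_add_cancel hr,
    mul_sum] at hcount'
  change (n : ℤ) * Nat.card {d // IsModularTree n k r d} = _
  rw [hcount']
  refine (sum_congr rfl fun j _ => by ring).trans
    (sum_range_eq_sum_range_of_eq_zero (fun j hj => ?_) fun j hj => ?_)
  · rw [Nat.choose_eq_zero_of_lt (by omega : r - 1 < j)]
    simp
  · have hdiv := Nat.lt_div_mul_add (a := n - r) (zero_lt_one.trans_le hk)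
    have hmul := Nat.mul_le_mul_right k hj
    rw [add_mul, one_mul] at hmul
    rw [Nat.choose_eq_zero_of_lt (by omega : n - j * k < r)]
    simp
end

section
/- Let ω be an element of a commutative ring with ω^k = 1, and define a * b := ω·a + b. For any parenthesization of x_0 * ⋯ * x_n corresponding to a binary tree t with left depth sequence (δ_0,...,δ_n), the value of that parenthesization equals Σ_{i=0}^{n} ω^{δ_i} · x_i. -/
/-- Binary trees (parenthesizations). -/
inductive BTree : Type
  | leaf : BTree
  | node : BTree → BTree → BTree

namespace BTree

/-- The number of leaves of a binary tree. -/
def numLeaves : BTree → ℕ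
  | leaf => 1
  | node l r => numLeaves l + numLeaves r

/-- The value of the parenthesization of `x_off * x_{off+1} * ⋯` corresponding to a
binary tree (leaves labeled left-to-right starting at `off`), where `a * b := ω·a + b`. -/
def value {R : Type*} [CommRing R] (ω : R) (x : ℕ → R) : BTree → ℕ → R
  | leaf, off => x off
  | node l r, off => ω * value ω x l off + value ω x r (off + numLeaves l)

/-- The list of left depths of the leaves (left-to-right): the left depth of a leaf is
the number of left steps on the path from the root down to it. -/
def leftDepths : BTree → List ℕ
  | leaf => [0]
  | node l r => (leftDepths l).map (· + 1) ++ leftDepths r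

theorem length_leftDepths (t : BTree) : t.leftDepths.length = t.numLeaves := by
  induction t with
  | leaf => rfl
  | node l r ihl ihr => simp [leftDepths, numLeaves, ihl, ihr]

theorem getD_leftDepths_node_of_lt {l : BTree} (r : BTree) {i : ℕ} (hi : i < l.numLeaves) :
    (node l r).leftDepths.getD i 0 = l.leftDepths.getD i 0 + 1 := by
  have hlen : i < l.leftDepths.length := by rwa [length_leftDepths]
  rw [leftDepths, List.getD_append _ _ _ _ (by simpa using hlen), List.getD_eq_getElem _ _ hlen,
    List.getD_eq_getElem _ _ (by simpa using hlen), List.getElem_map]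

theorem getD_leftDepths_node_add (l r : BTree) (i : ℕ) :
    (node l r).leftDepths.getD (l.numLeaves + i) 0 = r.leftDepths.getD i 0 := by
  rw [leftDepths, List.getD_append_right _ _ _ _ (by simp [length_leftDepths])]
  simp [length_leftDepths]

theorem value_eq_sum_pow_leftDepth_add {R : Type*} [CommRing R] (ω : R) (x : ℕ → R)
    (t : BTree) (off : ℕ) :
    value ω x t off =
      ∑ i ∈ Finset.range t.numLeaves, ω ^ (t.leftDepths.getD i 0) * x (off + i) := by
  induction t generalizing off with
  | leaf => simp [value, numLeaves, leftDepths]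
  | node l r ihl ihr =>
    rw [value, ihl, ihr, numLeaves, Finset.sum_range_add, Finset.mul_sum]
    congr 1
    · refine Finset.sum_congr rfl fun i hi => ?_
      rw [getD_leftDepths_node_of_lt r (Finset.mem_range.mp hi), pow_succ]
      ring
    · refine Finset.sum_congr rfl fun i _ => ?_
      rw [getD_leftDepths_node_add, add_assoc]

theorem value_eq_sum_pow_leftDepth_general {R : Type*} [CommRing R] (ω : R)
    (x : ℕ → R) (t : BTree) :
    value ω x t 0 = ∑ i ∈ Finset.range t.numLeaves, ω ^ (t.leftDepths.getD i 0) * x i := by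
  simpa using value_eq_sum_pow_leftDepth_add ω x t 0

/-- For `ω` with `ω^k = 1` and `a * b := ω·a + b`, the parenthesization of
`x_0 * ⋯ * x_n` given by a binary tree `t` with left depths `(δ_0,…,δ_n)` evaluates
to `∑_i ω^{δ_i}·x_i`. -/
theorem value_eq_sum_pow_leftDepth {R : Type*} [CommRing R] (k : ℕ) (ω : R)
    (hω : ω ^ k = 1) (x : ℕ → R) (t : BTree) :
    value ω x t 0 = ∑ i ∈ Finset.range t.numLeaves, ω ^ (t.leftDepths.getD i 0) * x i :=
  value_eq_sum_pow_leftDepth_general ω x t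

end BTree
end
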